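/- arXiv:1910.03691 — 5 statements merged into one kernel-verified Lean document; each statement's English description precedes it below -/
import Mathlib

section
/- Let f ∈ C_c^∞((-1,1)×𝕋) and let Π₊ denote the projection onto strictly positive Fourier modes in the y-variable. Then ‖|D_y|^{1/2} Π₊ f‖_{L²}² = 2 Im ⟨∂_x Π₊ f, x ∂_y Π₊ f⟩_{L²}, and consequently ‖|D_y|^{1/2} Π₊ f‖_{L²}² ≤ ‖∂_x Π₊ f‖_{L²}² + ‖x ∂_y Π₊ f‖_{L²}². -/
open MeasureTheory Complex

/-- Fourier coefficient in the periodic variable `y` (period `2π`):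
`c_n(x) = (1/2π) ∫_0^{2π} f(x,y) e^{-iny} dy`. -/
noncomputable def fourierCoeffY (f : ℝ × ℝ → ℂ) (n : ℤ) (x : ℝ) : ℂ :=
  (1 / (2 * Real.pi) : ℂ) * ∫ y in (0:ℝ)..(2 * Real.pi), f (x, y) * Complex.exp (-Complex.I * n * y)

namespace Stmt0Aux

/-- x-partial derivative (as a slice derivative). -/
noncomputable def Dx (h : ℝ × ℝ → ℂ) (p : ℝ × ℝ) : ℂ := deriv (fun t => h (t, p.2)) p.1
/-- y-partial derivative. -/
noncomputable def Dy (h : ℝ × ℝ → ℂ) (p : ℝ × ℝ) : ℂ := deriv (fun t => h (p.1, t)) p.2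

structure Good (h : ℝ × ℝ → ℂ) : Prop where
  smooth : ContDiff ℝ (⊤ : ℕ∞) h
  per : ∀ x y, h (x, y + 2 * Real.pi) = h (x, y)
  supp : ∀ x y, 1 < |x| → h (x, y) = 0

variable {h : ℝ × ℝ → ℂ}

theorem hasDerivAt_slice1 (hs : ContDiff ℝ (⊤ : ℕ∞) h) (x y : ℝ) :
    HasDerivAt (fun t => h (t, y)) (fderiv ℝ h (x, y) (1, 0)) x := by
  have hd : HasFDerivAt h (fderiv ℝ h (x, y)) (x, y) :=
    (hs.differentiable (by simp) (x, y)).hasFDerivAt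
  have hc : HasDerivAt (fun t : ℝ => (t, y)) ((1 : ℝ), (0 : ℝ)) x := by
    simpa using (hasDerivAt_id x).prodMk (hasDerivAt_const x y)
  exact hd.comp_hasDerivAt x hc

theorem hasDerivAt_slice2 (hs : ContDiff ℝ (⊤ : ℕ∞) h) (x y : ℝ) :
    HasDerivAt (fun t => h (x, t)) (fderiv ℝ h (x, y) (0, 1)) y := by
  have hd : HasFDerivAt h (fderiv ℝ h (x, y)) (x, y) :=
    (hs.differentiable (by simp) (x, y)).hasFDerivAt
  have hc : HasDerivAt (fun t : ℝ => (x, t)) ((0 : ℝ), (1 : ℝ)) y := by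
    simpa using (hasDerivAt_const y x).prodMk (hasDerivAt_id y)
  exact hd.comp_hasDerivAt y hc

theorem Dx_eq (hs : ContDiff ℝ (⊤ : ℕ∞) h) (p : ℝ × ℝ) : Dx h p = fderiv ℝ h p (1, 0) :=
  (hasDerivAt_slice1 hs p.1 p.2).deriv

theorem Dy_eq (hs : ContDiff ℝ (⊤ : ℕ∞) h) (p : ℝ × ℝ) : Dy h p = fderiv ℝ h p (0, 1) :=
  (hasDerivAt_slice2 hs p.1 p.2).deriv

theorem smooth_fderiv_apply (hs : ContDiff ℝ (⊤ : ℕ∞) h) (v : ℝ × ℝ) :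
    ContDiff ℝ (⊤ : ℕ∞) (fun p => fderiv ℝ h p v) := by
  have h1 : ContDiff ℝ (⊤ : ℕ∞) (fderiv ℝ h) := hs.fderiv_right (by simp)
  exact h1.clm_apply contDiff_const

theorem Good.dx (hg : Good h) : Good (Dx h) := by
  constructor
  · have heq : Dx h = fun p => fderiv ℝ h p ((1 : ℝ), (0 : ℝ)) := by
      funext p; exact Dx_eq hg.smooth p
    rw [heq]; exact smooth_fderiv_apply hg.smooth _
  · intro x y
    simp only [Dx]
    congr 1
    funext t
    exact hg.per t y
  · intro x y hx
    simp only [Dx]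
    have hev : (fun t => h (t, y)) =ᶠ[nhds x] fun _ => (0 : ℂ) := by
      have : ∀ᶠ t in nhds x, 1 < |t| := by
        have : IsOpen {t : ℝ | 1 < |t|} := isOpen_lt continuous_const continuous_abs
        exact this.eventually_mem hx
      filter_upwards [this] with t ht using hg.supp t y ht
    rw [hev.deriv_eq, deriv_const]

theorem Good.dy (hg : Good h) : Good (Dy h) := by
  constructor
  · have heq : Dy h = fun p => fderiv ℝ h p ((0 : ℝ), (1 : ℝ)) := by
      funext p; exact Dy_eq hg.smooth p
    rw [heq]; exact smooth_fderiv_apply hg.smooth _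
  · intro x y
    simp only [Dy]
    have heq : (fun t => h (x, t + 2 * Real.pi)) = fun t => h (x, t) := by
      funext t; exact hg.per x t
    rw [← deriv_comp_add_const (fun t => h (x, t)) (2 * Real.pi) y, heq]
  · intro x y hx
    simp only [Dy]
    have : (fun t => h (x, t)) = fun _ => (0 : ℂ) := by
      funext t; exact hg.supp x t hx
    rw [this, deriv_const]

theorem Good.bound (hg : Good h) : ∃ C : ℝ, 0 ≤ C ∧ ∀ p, ‖h p‖ ≤ C := by
  obtain ⟨C, hC⟩ := (isCompact_Icc.prod isCompact_Icc :
      IsCompact ((Set.Icc (-2 : ℝ) 2) ×ˢ (Set.Icc (0 : ℝ) (2 * Real.pi)))).exists_bound_of_continuousOn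
    (hg.smooth.continuous.continuousOn)
  refine ⟨max C 0, le_max_right _ _, ?_⟩
  rintro ⟨x, y⟩
  by_cases hx : |x| ≤ 2
  · -- reduce y to [0, 2π) by periodicity
    have hper' : Function.Periodic (fun t => h (x, t)) (2 * Real.pi) := fun t => hg.per x t
    have h2pi : 0 < 2 * Real.pi := by positivity
    set y' : ℝ := y - (⌊y / (2 * Real.pi)⌋ : ℤ) * (2 * Real.pi) with hy'e
    have hy' : h (x, y) = h (x, y') := by
      exact (hper'.sub_int_mul_eq (x := y) (n := ⌊y / (2 * Real.pi)⌋)).symm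
    have hy'mem : y' ∈ Set.Icc (0 : ℝ) (2 * Real.pi) := by
      constructor
      · rw [hy'e]; exact Int.sub_floor_div_mul_nonneg y h2pi
      · rw [hy'e]; exact le_of_lt (Int.sub_floor_div_mul_lt y h2pi)
    rw [hy']
    exact le_max_of_le_left (hC (x, y') ⟨abs_le.mp hx, hy'mem⟩)
  · have : h (x, y) = 0 := hg.supp x y (by linarith [abs_nonneg x, not_le.mp hx])
    simp [this]


theorem norm_exp_eval (m : ℤ) (y : ℝ) : ‖Complex.exp (-Complex.I * m * y)‖ = 1 := by
  rw [Complex.norm_exp]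
  have : (-Complex.I * m * y).re = 0 := by simp
  rw [this, Real.exp_zero]

theorem coeff_le_of_bound {C : ℝ} (hc : Continuous h) (hC : ∀ p, ‖h p‖ ≤ C) (m : ℤ) (x : ℝ) :
    ‖fourierCoeffY h m x‖ ≤ C := by
  have hpi : (0:ℝ) < Real.pi := Real.pi_pos
  have h1 : ‖∫ y in (0:ℝ)..(2 * Real.pi), h (x, y) * Complex.exp (-Complex.I * m * y)‖
      ≤ C * |2 * Real.pi - 0| := by
    apply intervalIntegral.norm_integral_le_of_norm_le_const
    intro y _
    rw [norm_mul, norm_exp_eval, mul_one]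
    exact hC (x, y)
  rw [fourierCoeffY, norm_mul]
  have h2 : ‖(1 / (2 * Real.pi) : ℂ)‖ = 1 / (2 * Real.pi) := by
    rw [norm_div, norm_one]
    congr 1
    rw [show ((2 : ℂ) * Real.pi) = ((2 * Real.pi : ℝ) : ℂ) by push_cast; ring,
      Complex.norm_real, Real.norm_eq_abs, abs_of_pos (by positivity)]
  rw [h2]
  calc 1 / (2 * Real.pi) * ‖∫ y in (0:ℝ)..(2 * Real.pi), h (x, y) * Complex.exp (-Complex.I * m * y)‖
      ≤ 1 / (2 * Real.pi) * (C * |2 * Real.pi - 0|) := by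
        apply mul_le_mul_of_nonneg_left h1 (by positivity)
    _ = C := by
        have hpi' : (0:ℝ) < 2 * Real.pi - 0 := by simpa using Real.two_pi_pos
        rw [abs_of_pos hpi']
        field_simp; ring


theorem coeff_Dy (hg : Good h) (m : ℤ) (x : ℝ) :
    fourierCoeffY (Dy h) m x = (Complex.I * m) * fourierCoeffY h m x := by
  have hu : ∀ y ∈ Set.uIcc (0:ℝ) (2 * Real.pi), HasDerivAt (fun t => h (x, t)) (Dy h (x, y)) y := by
    intro y _
    have := hasDerivAt_slice2 hg.smooth x y
    rwa [← Dy_eq hg.smooth (x, y)] at this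
  have hv : ∀ y ∈ Set.uIcc (0:ℝ) (2 * Real.pi),
      HasDerivAt (fun t : ℝ => Complex.exp (-Complex.I * m * t))
        ((-Complex.I * m) * Complex.exp (-Complex.I * m * y)) y := by
    intro y _
    have h1 : HasDerivAt (fun t : ℝ => ((t : ℂ))) 1 y := by
      simpa using (hasDerivAt_id y).ofReal_comp
    have h2 : HasDerivAt (fun t : ℝ => (-Complex.I * m) * (t : ℂ)) (-Complex.I * m) y := by
      simpa using h1.const_mul (-Complex.I * m)
    have h3 := h2.cexp
    simpa [mul_comm, mul_assoc, mul_left_comm] using h3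
  have hcy : Continuous fun y : ℝ => ((x, y) : ℝ × ℝ) := continuous_const.prodMk continuous_id
  have hce : Continuous fun y : ℝ => Complex.exp (-Complex.I * m * y) :=
    Complex.continuous_exp.comp (continuous_const.mul Complex.continuous_ofReal)
  have hint1 : IntervalIntegrable (fun y => Dy h (x, y)) volume 0 (2 * Real.pi) :=
    ((hg.dy.smooth.continuous).comp hcy).intervalIntegrable _ _
  have hint2 : IntervalIntegrable
      (fun y => (-Complex.I * m) * Complex.exp (-Complex.I * m * y)) volume 0 (2 * Real.pi) :=
    (continuous_const.mul hce).intervalIntegrable _ _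
  have key := intervalIntegral.integral_deriv_mul_eq_sub hu hv hint1 hint2
  have hc1 : Continuous fun y : ℝ => Dy h (x, y) * Complex.exp (-Complex.I * m * y) :=
    ((hg.dy.smooth.continuous).comp hcy).mul hce
  have hc2 : Continuous fun y : ℝ =>
      h (x, y) * (-Complex.I * m * Complex.exp (-Complex.I * m * y)) :=
    ((hg.smooth.continuous).comp hcy).mul (continuous_const.mul hce)
  rw [intervalIntegral.integral_add (hc1.intervalIntegrable _ _) (hc2.intervalIntegrable _ _)]
    at key
  have hbd : h (x, 2 * Real.pi) * Complex.exp (-Complex.I * m * ((2 * Real.pi : ℝ) : ℂ))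
      - h (x, 0) * Complex.exp (-Complex.I * m * ((0 : ℝ) : ℂ)) = 0 := by
    have hper0 : h (x, 2 * Real.pi) = h (x, 0) := by simpa using hg.per x 0
    have hexp : Complex.exp (-Complex.I * m * ((2 * Real.pi : ℝ) : ℂ)) = 1 := by
      rw [show (-Complex.I * m * ((2 * Real.pi : ℝ) : ℂ)) = ((-m : ℤ) : ℂ) * (2 * Real.pi * Complex.I) by
        push_cast; ring]
      exact Complex.exp_int_mul_two_pi_mul_I (-m)
    rw [hper0, hexp]
    simp
  rw [hbd] at key
  have hsnd : (∫ y in (0:ℝ)..(2 * Real.pi),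
      h (x, y) * (-Complex.I * m * Complex.exp (-Complex.I * m * y)))
      = (-Complex.I * m) * ∫ y in (0:ℝ)..(2 * Real.pi), h (x, y) * Complex.exp (-Complex.I * m * y) := by
    rw [← intervalIntegral.integral_const_mul]
    congr 1; funext y; ring
  rw [hsnd] at key
  have key2 : (∫ y in (0:ℝ)..(2 * Real.pi), Dy h (x, y) * Complex.exp (-Complex.I * m * y))
      = (Complex.I * m) * ∫ y in (0:ℝ)..(2 * Real.pi), h (x, y) * Complex.exp (-Complex.I * m * y) := by
    have := key
    have h' : (∫ y in (0:ℝ)..(2 * Real.pi), Dy h (x, y) * Complex.exp (-Complex.I * m * y))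
        = - ((-Complex.I * m) * ∫ y in (0:ℝ)..(2 * Real.pi), h (x, y) * Complex.exp (-Complex.I * m * y)) := by
      linear_combination key
    rw [h']; ring
  simp only [fourierCoeffY]
  rw [key2]; ring


theorem hasDerivAt_coeff (hg : Good h) (m : ℤ) (x₀ : ℝ) :
    HasDerivAt (fourierCoeffY h m) (fourierCoeffY (Dx h) m x₀) x₀ := by
  obtain ⟨C, hC0, hC⟩ := hg.dx.bound
  have hce : Continuous fun y : ℝ => Complex.exp (-Complex.I * m * y) :=
    Complex.continuous_exp.comp (continuous_const.mul Complex.continuous_ofReal)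
  have hcy : ∀ x : ℝ, Continuous fun y : ℝ => ((x, y) : ℝ × ℝ) := fun x =>
    continuous_const.prodMk continuous_id
  have main := intervalIntegral.hasDerivAt_integral_of_dominated_loc_of_deriv_le
    (F := fun x y => h (x, y) * Complex.exp (-Complex.I * m * y))
    (F' := fun x y => Dx h (x, y) * Complex.exp (-Complex.I * m * y))
    (x₀ := x₀) (a := (0:ℝ)) (b := 2 * Real.pi) (μ := volume) (bound := fun _ => C)
    (s := Metric.ball x₀ 1) (Metric.ball_mem_nhds x₀ one_pos)
    (Filter.Eventually.of_forall fun x =>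
      (((hg.smooth.continuous.comp (hcy x)).mul hce)).aestronglyMeasurable)
    (((hg.smooth.continuous.comp (hcy x₀)).mul hce).intervalIntegrable _ _)
    (((hg.dx.smooth.continuous.comp (hcy x₀)).mul hce)).aestronglyMeasurable
    (Filter.Eventually.of_forall fun y _ x _ => by
      rw [norm_mul, norm_exp_eval, mul_one]; exact hC (x, y))
    (intervalIntegrable_const)
    (Filter.Eventually.of_forall fun y _ x _ => by
      have h1 := hasDerivAt_slice1 hg.smooth x y
      rw [← Dx_eq hg.smooth (x, y)] at h1
      exact h1.mul_const _)
  have hder := main.2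
  exact hder.const_mul ((1 / (2 * Real.pi) : ℂ))


theorem decay (hg : Good h) :
    ∃ C : ℝ, 0 ≤ C ∧ ∀ (m : ℤ) (x : ℝ), ((m : ℝ))^2 * ‖fourierCoeffY h m x‖ ≤ C := by
  obtain ⟨C, hC0, hC⟩ := (hg.dy.dy).bound
  refine ⟨C, hC0, fun m x => ?_⟩
  have h1 : fourierCoeffY (Dy (Dy h)) m x
      = (Complex.I * m) * ((Complex.I * m) * fourierCoeffY h m x) := by
    rw [coeff_Dy hg.dy, coeff_Dy hg]
  have h2 : ‖fourierCoeffY (Dy (Dy h)) m x‖ = (m : ℝ)^2 * ‖fourierCoeffY h m x‖ := by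
    rw [h1]
    rw [norm_mul, norm_mul, norm_mul, norm_mul, Complex.norm_I, one_mul]
    have : ‖((m : ℤ) : ℂ)‖ = |(m : ℝ)| := by
      rw [show ((m : ℤ) : ℂ) = ((m : ℝ) : ℂ) by push_cast; ring, Complex.norm_real,
        Real.norm_eq_abs]
    rw [this]
    rw [← mul_assoc, ← abs_mul, abs_mul_self]
    ring_nf
  rw [← h2]
  exact coeff_le_of_bound (hg.dy.dy.smooth.continuous) hC m x

section Mode

variable {m : ℤ}

/-- The per-mode identity. -/
theorem mode_identity (hg : Good h)
    (hb : ∀ x y, x ∉ Set.Ioo (-1 : ℝ) 1 → h (x, y) = 0) (m : ℤ) :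
    (m : ℝ) * ∫ x in Set.Ioo (-1 : ℝ) 1, ‖fourierCoeffY h m x‖ ^ 2
      = 2 * (∫ x in Set.Ioo (-1 : ℝ) 1,
          deriv (fourierCoeffY h m) x *
            (starRingEnd ℂ) ((x : ℂ) * (Complex.I * (m : ℂ)) * fourierCoeffY h m x)).im := by
  set g := fourierCoeffY h m with hgdef
  set gd := fourierCoeffY (Dx h) m with hgddef
  have hA : ∀ x, HasDerivAt g (gd x) x := fun x => hasDerivAt_coeff hg m x
  have hB : deriv g = gd := funext fun x => (hA x).deriv
  have hA' : ∀ x, HasDerivAt gd (fourierCoeffY (Dx (Dx h)) m x) x := fun x =>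
    hasDerivAt_coeff hg.dx m x
  have hgc : Continuous g :=
    continuous_iff_continuousAt.2 fun x => (hA x).differentiableAt.continuousAt
  have hgdc : Continuous gd :=
    continuous_iff_continuousAt.2 fun x => (hA' x).differentiableAt.continuousAt
  -- boundary values vanish
  have hzero : ∀ x : ℝ, x ∉ Set.Ioo (-1 : ℝ) 1 → g x = 0 := by
    intro x hx
    rw [hgdef]
    simp only [fourierCoeffY]
    have : (fun y : ℝ => h (x, y) * Complex.exp (-Complex.I * m * y)) = fun _ => 0 := by
      funext y; rw [hb x y hx, zero_mul]
    rw [this]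
    simp
  have hg1 : g 1 = 0 := hzero 1 (by simp)
  have hgm1 : g (-1) = 0 := hzero (-1) (by simp)
  -- the real functions
  set N : ℝ → ℝ := fun x => (g x).re * (g x).re + (g x).im * (g x).im with hNdef
  set N' : ℝ → ℝ := fun x =>
    ((gd x).re * (g x).re + (g x).re * (gd x).re) +
    ((gd x).im * (g x).im + (g x).im * (gd x).im) with hN'def
  have hre : ∀ x, HasDerivAt (fun x => (g x).re) ((gd x).re) x := fun x =>
    (Complex.reCLM.hasFDerivAt.comp_hasDerivAt x (hA x))
  have him : ∀ x, HasDerivAt (fun x => (g x).im) ((gd x).im) x := fun x =>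
    (Complex.imCLM.hasFDerivAt.comp_hasDerivAt x (hA x))
  have hN : ∀ x, HasDerivAt N (N' x) x := fun x =>
    ((hre x).mul (hre x)).add ((him x).mul (him x))
  have hNc : Continuous N := by
    apply Continuous.add
    · exact ((Complex.continuous_re.comp hgc).mul (Complex.continuous_re.comp hgc))
    · exact ((Complex.continuous_im.comp hgc).mul (Complex.continuous_im.comp hgc))
  have hN'c : Continuous N' := by
    have h1 := Complex.continuous_re.comp hgc
    have h2 := Complex.continuous_im.comp hgc
    have h3 := Complex.continuous_re.comp hgdc
    have h4 := Complex.continuous_im.comp hgdc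
    exact ((h3.mul h1).add (h1.mul h3)).add ((h4.mul h2).add (h2.mul h4))
  have hφ : ∀ x, HasDerivAt (fun x => x * N x) (N x + x * N' x) x := by
    intro x
    have : HasDerivAt (fun y => y * N y) (1 * N x + x * N' x) x := (hasDerivAt_id' x).mul (hN x)
    simpa using this
  have hftc : (∫ x in (-1 : ℝ)..1, (N x + x * N' x)) = 0 := by
    rw [intervalIntegral.integral_eq_sub_of_hasDerivAt (fun x _ => hφ x)
      ((hNc.add (continuous_id.mul hN'c)).intervalIntegrable _ _)]
    have hN1 : N 1 = 0 := by rw [hNdef]; simp [hg1]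
    have hNm1 : N (-1) = 0 := by rw [hNdef]; simp [hgm1]
    simp [hN1, hNm1]
  have hsplit : (∫ x in (-1 : ℝ)..1, N x) = - ∫ x in (-1 : ℝ)..1, x * N' x := by
    have hcxN' : Continuous fun x : ℝ => x * N' x := continuous_id.mul hN'c
    rw [intervalIntegral.integral_add (hNc.intervalIntegrable _ _)
      (hcxN'.intervalIntegrable _ _)] at hftc
    linarith
  -- convert LHS
  have hLHS : (∫ x in Set.Ioo (-1 : ℝ) 1, ‖g x‖ ^ 2) = ∫ x in (-1 : ℝ)..1, N x := by
    rw [intervalIntegral.integral_of_le (by norm_num : (-1:ℝ) ≤ 1),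
      integral_Ioc_eq_integral_Ioo]
    apply setIntegral_congr_fun measurableSet_Ioo
    intro x _
    show ‖g x‖ ^ 2 = N x
    rw [hNdef]
    rw [show ‖g x‖ ^ 2 = Complex.normSq (g x) by
      rw [← Complex.sq_norm]]
    simp [Complex.normSq_apply]
  -- convert RHS
  set Φ : ℝ → ℂ := fun x => gd x *
      (starRingEnd ℂ) ((x : ℂ) * (Complex.I * (m : ℂ)) * g x) with hΦdef
  have hΦc : Continuous Φ := by
    apply hgdc.mul
    apply Complex.continuous_conj.comp
    exact ((Complex.continuous_ofReal.mul continuous_const).mul hgc)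
  have hΦint : IntegrableOn Φ (Set.Ioo (-1 : ℝ) 1) volume :=
    ((hΦc.continuousOn).integrableOn_compact isCompact_Icc).mono_set Set.Ioo_subset_Icc_self
  have hΦim : ∀ x : ℝ, (Φ x).im = -((m : ℝ) * (x * N' x)) / 2 := by
    intro x
    rw [hΦdef, hN'def]
    simp only [Complex.mul_im, Complex.mul_re, Complex.conj_re, Complex.conj_im,
      Complex.ofReal_re, Complex.ofReal_im, Complex.I_re, Complex.I_im,
      Complex.intCast_re, Complex.intCast_im]
    ring
  have hRHS : (∫ x in Set.Ioo (-1 : ℝ) 1, Φ x).im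
      = -(m : ℝ) / 2 * ∫ x in (-1 : ℝ)..1, x * N' x := by
    have him2 := integral_im hΦint
    simp only [RCLike.im_to_complex] at him2
    rw [← him2]
    rw [intervalIntegral.integral_of_le (by norm_num : (-1:ℝ) ≤ 1),
      integral_Ioc_eq_integral_Ioo]
    rw [← MeasureTheory.integral_const_mul]
    apply setIntegral_congr_fun measurableSet_Ioo
    intro x _
    show (Φ x).im = -(m : ℝ) / 2 * (x * N' x)
    rw [hΦim x]
    ring
  rw [hB] at *
  rw [hLHS, hRHS, hsplit]
  ring

theorem coeff_continuous (hg : Good h) (m : ℤ) : Continuous (fourierCoeffY h m) :=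
  continuous_iff_continuousAt.2 fun x =>
    (hasDerivAt_coeff hg m x).differentiableAt.continuousAt

end Mode

end Stmt0Aux


open Stmt0Aux in
/-- For `f ∈ C_c^∞((-1,1)×𝕋)`, with `Π₊` the projection on strictly positive Fourier modes
in `y`,
`‖|D_y|^{1/2} Π₊ f‖² = 2 Im ⟨∂_x Π₊ f, x ∂_y Π₊ f⟩` and consequently
`‖|D_y|^{1/2} Π₊ f‖² ≤ ‖∂_x Π₊ f‖² + ‖x ∂_y Π₊ f‖²`.
(Everything is expressed mode by mode through the Fourier coefficients in `y`; the common
factor `2π` in all `L²(Ω)` norms has been cancelled.) -/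
theorem stmt_0 (f : ℝ × ℝ → ℂ)
    (hf : ContDiff ℝ (⊤ : ℕ∞) f)
    (hper : ∀ x y, f (x, y + 2 * Real.pi) = f (x, y))
    (hsupp : ∀ x y, x ∉ Set.Ioo (-1 : ℝ) 1 → f (x, y) = 0) :
    (∑' n : ℕ, ((n : ℝ) + 1) * ∫ x in Set.Ioo (-1 : ℝ) 1, ‖fourierCoeffY f ((n : ℤ) + 1) x‖ ^ 2)
      = 2 * (∑' n : ℕ, ∫ x in Set.Ioo (-1 : ℝ) 1,
          deriv (fourierCoeffY f ((n : ℤ) + 1)) x *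
            (starRingEnd ℂ) ((x : ℂ) * (Complex.I * ((n : ℂ) + 1)) *
              fourierCoeffY f ((n : ℤ) + 1) x)).im
    ∧ (∑' n : ℕ, ((n : ℝ) + 1) * ∫ x in Set.Ioo (-1 : ℝ) 1, ‖fourierCoeffY f ((n : ℤ) + 1) x‖ ^ 2)
      ≤ (∑' n : ℕ, ∫ x in Set.Ioo (-1 : ℝ) 1, ‖deriv (fourierCoeffY f ((n : ℤ) + 1)) x‖ ^ 2)
        + (∑' n : ℕ, ∫ x in Set.Ioo (-1 : ℝ) 1,
            ‖(x : ℂ) * (Complex.I * ((n : ℂ) + 1)) * fourierCoeffY f ((n : ℤ) + 1) x‖ ^ 2) := by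
  have hGf : Good f := by
    refine ⟨hf, hper, fun x y hx => hsupp x y ?_⟩
    intro hmem
    have := abs_lt.mpr ⟨hmem.1, hmem.2⟩
    linarith
  obtain ⟨C1, hC10, hC1⟩ := decay hGf
  obtain ⟨C2, hC20, hC2⟩ := decay hGf.dx
  have hderiv : ∀ n : ℕ, deriv (fourierCoeffY f ((n : ℤ) + 1))
      = fourierCoeffY (Dx f) ((n : ℤ) + 1) := fun n =>
    funext fun x => (hasDerivAt_coeff hGf _ x).deriv
  simp only [hderiv]
  set g : ℕ → ℝ → ℂ := fun n => fourierCoeffY f ((n : ℤ) + 1) with hgdef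
  set gd : ℕ → ℝ → ℂ := fun n => fourierCoeffY (Dx f) ((n : ℤ) + 1) with hgddef
  set a : ℕ → ℝ := fun n => ((n : ℝ) + 1) * ∫ x in Set.Ioo (-1 : ℝ) 1, ‖g n x‖ ^ 2 with hadef
  set J : ℕ → ℂ := fun n => ∫ x in Set.Ioo (-1 : ℝ) 1,
      gd n x * (starRingEnd ℂ) ((x : ℂ) * (Complex.I * ((n : ℂ) + 1)) * g n x) with hJdef
  set b : ℕ → ℝ := fun n => ∫ x in Set.Ioo (-1 : ℝ) 1, ‖gd n x‖ ^ 2 with hbdef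
  set c : ℕ → ℝ := fun n => ∫ x in Set.Ioo (-1 : ℝ) 1,
      ‖(x : ℂ) * (Complex.I * ((n : ℂ) + 1)) * g n x‖ ^ 2 with hcdef
  show (∑' n, a n) = 2 * (∑' n, J n).im ∧ (∑' n, a n) ≤ (∑' n, b n) + (∑' n, c n)
  -- basic facts about each mode
  have hmR : ∀ n : ℕ, (1 : ℝ) ≤ (n : ℝ) + 1 := fun n => by have h : (0:ℝ) ≤ (n:ℝ) := Nat.cast_nonneg n; linarith
  have hmpos : ∀ n : ℕ, (0 : ℝ) < (n : ℝ) + 1 := fun n => by positivity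
  have hgc : ∀ n, Continuous (g n) := fun n => coeff_continuous hGf _
  have hgdc : ∀ n, Continuous (gd n) := fun n => coeff_continuous hGf.dx _
  have hgb : ∀ (n : ℕ) (x : ℝ), ‖g n x‖ ≤ C1 / ((n : ℝ) + 1) ^ 2 := by
    intro n x
    have := hC1 ((n : ℤ) + 1) x
    rw [show ((((n : ℤ) + 1) : ℤ) : ℝ) = (n : ℝ) + 1 by push_cast; ring] at this
    calc ‖g n x‖ = (((n:ℝ)+1)^2 * ‖g n x‖) / ((n:ℝ)+1)^2 := by field_simp
      _ ≤ C1 / ((n:ℝ)+1)^2 := div_le_div_of_nonneg_right this (by positivity)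
  have hgdb : ∀ (n : ℕ) (x : ℝ), ‖gd n x‖ ≤ C2 / ((n : ℝ) + 1) ^ 2 := by
    intro n x
    have := hC2 ((n : ℤ) + 1) x
    rw [show ((((n : ℤ) + 1) : ℤ) : ℝ) = (n : ℝ) + 1 by push_cast; ring] at this
    calc ‖gd n x‖ = (((n:ℝ)+1)^2 * ‖gd n x‖) / ((n:ℝ)+1)^2 := by field_simp
      _ ≤ C2 / ((n:ℝ)+1)^2 := div_le_div_of_nonneg_right this (by positivity)
  -- norm of the weight
  have hwnorm : ∀ (n : ℕ) (x : ℝ), ‖(x : ℂ) * (Complex.I * ((n : ℂ) + 1)) * g n x‖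
      = |x| * (((n : ℝ) + 1) * ‖g n x‖) := by
    intro n x
    rw [norm_mul, norm_mul, norm_mul, Complex.norm_I, one_mul, Complex.norm_real,
      Real.norm_eq_abs]
    rw [show ((n : ℂ) + 1) = (((n : ℝ) + 1 : ℝ) : ℂ) by push_cast; ring, Complex.norm_real,
      Real.norm_eq_abs, abs_of_pos (hmpos n)]
    ring
  have hwb : ∀ (n : ℕ), ∀ x ∈ Set.Ioo (-1 : ℝ) 1,
      ‖(x : ℂ) * (Complex.I * ((n : ℂ) + 1)) * g n x‖ ≤ C1 / ((n : ℝ) + 1) := by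
    intro n x hx
    rw [hwnorm]
    have hxabs : |x| ≤ 1 := le_of_lt (abs_lt.mpr ⟨hx.1, hx.2⟩)
    calc |x| * (((n : ℝ) + 1) * ‖g n x‖) ≤ 1 * (((n : ℝ) + 1) * (C1 / ((n : ℝ) + 1) ^ 2)) := by
          apply mul_le_mul hxabs (mul_le_mul_of_nonneg_left (hgb n x) (le_of_lt (hmpos n)))
            (by positivity) (by norm_num)
      _ = C1 / ((n : ℝ) + 1) := by field_simp
  -- continuity of integrands
  have hwc : ∀ n : ℕ, Continuous fun x : ℝ =>
      (x : ℂ) * (Complex.I * ((n : ℂ) + 1)) * g n x := fun n =>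
    (Complex.continuous_ofReal.mul continuous_const).mul (hgc n)
  have hΦc : ∀ n : ℕ, Continuous fun x : ℝ =>
      gd n x * (starRingEnd ℂ) ((x : ℂ) * (Complex.I * ((n : ℂ) + 1)) * g n x) := fun n =>
    (hgdc n).mul (Complex.continuous_conj.comp (hwc n))
  have hIoo : ∀ {F : ℝ → ℂ}, Continuous F → IntegrableOn F (Set.Ioo (-1 : ℝ) 1) volume :=
    fun hF => ((hF.continuousOn).integrableOn_compact isCompact_Icc).mono_set
      Set.Ioo_subset_Icc_self
  have hIooR : ∀ {F : ℝ → ℝ}, Continuous F → IntegrableOn F (Set.Ioo (-1 : ℝ) 1) volume :=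
    fun hF => ((hF.continuousOn).integrableOn_compact isCompact_Icc).mono_set
      Set.Ioo_subset_Icc_self
  have hvol : (volume (Set.Ioo (-1 : ℝ) 1)).toReal = 2 := by
    rw [Real.volume_Ioo, ENNReal.toReal_ofReal (by norm_num)]
    norm_num
  have hvolfin : volume (Set.Ioo (-1 : ℝ) 1) < ⊤ := by
    rw [Real.volume_Ioo]; exact ENNReal.ofReal_lt_top
  -- the per-mode identity
  have hid : ∀ n : ℕ, a n = 2 * (J n).im := by
    intro n
    have key := mode_identity hGf hsupp ((n : ℤ) + 1)
    rw [hderiv n] at key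
    rw [show ((((n : ℤ) + 1) : ℤ) : ℝ) = (n : ℝ) + 1 by push_cast; ring,
      show ((((n : ℤ) + 1) : ℤ) : ℂ) = (n : ℂ) + 1 by push_cast; ring] at key
    exact key
  -- per-mode inequality
  have hab : ∀ n : ℕ, a n ≤ b n + c n := by
    intro n
    rw [hid n, hJdef]
    have him := integral_im (hIoo (hΦc n))
    simp only [RCLike.im_to_complex] at him
    rw [← him]
    rw [← MeasureTheory.integral_add (hIooR (F := fun x => ‖gd n x‖ ^ 2) ((hgdc n).norm.pow 2))
      (hIooR (F := fun x => ‖(x : ℂ) * (Complex.I * ((n : ℂ) + 1)) * g n x‖ ^ 2) ((hwc n).norm.pow 2))]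
    rw [show (2 : ℝ) * ∫ x in Set.Ioo (-1:ℝ) 1,
        (gd n x * (starRingEnd ℂ) ((x : ℂ) * (Complex.I * ((n : ℂ) + 1)) * g n x)).im
        = ∫ x in Set.Ioo (-1:ℝ) 1,
        2 * (gd n x * (starRingEnd ℂ) ((x : ℂ) * (Complex.I * ((n : ℂ) + 1)) * g n x)).im by
      rw [← MeasureTheory.integral_const_mul]]
    apply setIntegral_mono_on
    · apply hIooR
      exact continuous_const.mul (Complex.continuous_im.comp (hΦc n))
    · exact (hIooR ((hgdc n).norm.pow 2)).add (hIooR ((hwc n).norm.pow 2))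
    · exact measurableSet_Ioo
    · intro x _
      set u := gd n x
      set v := (x : ℂ) * (Complex.I * ((n : ℂ) + 1)) * g n x
      calc 2 * (u * (starRingEnd ℂ) v).im ≤ 2 * (‖u‖ * ‖v‖) := by
            have h1 : (u * (starRingEnd ℂ) v).im ≤ ‖u * (starRingEnd ℂ) v‖ := by
              exact Complex.im_le_norm _
            have h2 : ‖u * (starRingEnd ℂ) v‖ = ‖u‖ * ‖v‖ := by
              rw [norm_mul, RCLike.norm_conj]
            linarith
        _ ≤ ‖u‖ ^ 2 + ‖v‖ ^ 2 := by
            have := two_mul_le_add_sq ‖u‖ ‖v‖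
            linarith
  -- summability
  have hS : Summable (fun n : ℕ => 1 / ((n : ℝ) + 1) ^ 2) := by
    have h : Summable (fun n : ℕ => 1 / ((n : ℝ)) ^ 2) := by
      rw [Real.summable_one_div_nat_pow]; norm_num
    refine ((summable_nat_add_iff 1).2 h).congr fun n => ?_
    push_cast; ring_nf
  have hbb : ∀ n : ℕ, b n ≤ (2 * C2 ^ 2) * (1 / ((n : ℝ) + 1) ^ 2) := by
    intro n
    rw [hbdef]
    calc (∫ x in Set.Ioo (-1:ℝ) 1, ‖gd n x‖ ^ 2)
        ≤ ∫ _x in Set.Ioo (-1:ℝ) 1, (C2 / ((n : ℝ) + 1) ^ 2) ^ 2 := by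
          apply setIntegral_mono_on (hIooR (F := fun x => ‖gd n x‖ ^ 2) ((hgdc n).norm.pow 2))
            (integrableOn_const hvolfin.ne) measurableSet_Ioo
          intro x _
          exact pow_le_pow_left₀ (norm_nonneg _) (hgdb n x) 2
      _ = 2 * (C2 / ((n : ℝ) + 1) ^ 2) ^ 2 := by
          rw [setIntegral_const, measureReal_def, hvol, smul_eq_mul]; try ring
      _ ≤ (2 * C2 ^ 2) * (1 / ((n : ℝ) + 1) ^ 2) := by
          rw [div_pow,
            show (2:ℝ) * C2^2 * (1/((n:ℝ)+1)^2) = 2 * (C2^2 / ((n:ℝ)+1)^2) by ring]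
          have h1 : ((n:ℝ) + 1) ^ 2 ≤ (((n:ℝ) + 1) ^ 2) ^ 2 := by
            nlinarith [hmR n, sq_nonneg ((n:ℝ)+1), sq_nonneg (((n:ℝ)+1)^2 - ((n:ℝ)+1))]
          have h2 : C2 ^ 2 / (((n:ℝ)+1)^2)^2 ≤ C2 ^ 2 / ((n:ℝ)+1)^2 :=
            div_le_div_of_nonneg_left (by positivity) (by positivity) h1
          linarith
  have hcb : ∀ n : ℕ, c n ≤ (2 * C1 ^ 2) * (1 / ((n : ℝ) + 1) ^ 2) := by
    intro n
    rw [hcdef]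
    calc (∫ x in Set.Ioo (-1:ℝ) 1, ‖(x : ℂ) * (Complex.I * ((n : ℂ) + 1)) * g n x‖ ^ 2)
        ≤ ∫ _x in Set.Ioo (-1:ℝ) 1, (C1 / ((n : ℝ) + 1)) ^ 2 := by
          apply setIntegral_mono_on (hIooR (F := fun x => ‖(x : ℂ) * (Complex.I * ((n : ℂ) + 1)) * g n x‖ ^ 2) ((hwc n).norm.pow 2))
            (integrableOn_const hvolfin.ne) measurableSet_Ioo
          intro x hx
          exact pow_le_pow_left₀ (norm_nonneg _) (hwb n x hx) 2
      _ = 2 * (C1 / ((n : ℝ) + 1)) ^ 2 := by rw [setIntegral_const, measureReal_def, hvol, smul_eq_mul]; try ring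
      _ = (2 * C1 ^ 2) * (1 / ((n : ℝ) + 1) ^ 2) := by rw [div_pow]; ring
  have hb_sum : Summable b := by
    refine Summable.of_nonneg_of_le (fun n => ?_) hbb (hS.mul_left (2 * C2 ^ 2))
    exact setIntegral_nonneg measurableSet_Ioo fun x _ => by positivity
  have hc_sum : Summable c := by
    refine Summable.of_nonneg_of_le (fun n => ?_) hcb (hS.mul_left (2 * C1 ^ 2))
    exact setIntegral_nonneg measurableSet_Ioo fun x _ => by positivity
  have ha_nonneg : ∀ n, 0 ≤ a n := by
    intro n
    rw [hadef]
    apply mul_nonneg (le_of_lt (hmpos n))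
    exact setIntegral_nonneg measurableSet_Ioo fun x _ => by positivity
  have ha_sum : Summable a :=
    Summable.of_nonneg_of_le ha_nonneg (fun n => hab n) (hb_sum.add hc_sum)
  have hJ_sum : Summable J := by
    apply Summable.of_norm_bounded (g := fun n : ℕ => (2 * (C2 * C1)) * (1 / ((n : ℝ) + 1) ^ 2))
      (hS.mul_left _)
    intro n
    rw [hJdef]
    have hbound : ∀ x ∈ Set.Ioo (-1:ℝ) 1,
        ‖gd n x * (starRingEnd ℂ) ((x : ℂ) * (Complex.I * ((n : ℂ) + 1)) * g n x)‖
          ≤ (C2 * C1) * (1 / ((n : ℝ) + 1) ^ 2) := by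
      intro x hx
      rw [norm_mul, RCLike.norm_conj]
      calc ‖gd n x‖ * ‖(x : ℂ) * (Complex.I * ((n : ℂ) + 1)) * g n x‖
          ≤ (C2 / ((n : ℝ) + 1) ^ 2) * (C1 / ((n : ℝ) + 1)) :=
            mul_le_mul (hgdb n x) (hwb n x hx) (norm_nonneg _) (by positivity)
        _ ≤ (C2 * C1) * (1 / ((n : ℝ) + 1) ^ 2) := by
            rw [div_mul_div_comm, mul_one_div]
            apply div_le_div_of_nonneg_left (by positivity) (by positivity)
            nlinarith [hmR n, hmpos n]
    calc ‖(∫ x in Set.Ioo (-1:ℝ) 1,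
        gd n x * (starRingEnd ℂ) ((x : ℂ) * (Complex.I * ((n : ℂ) + 1)) * g n x))‖
        ≤ (C2 * C1) * (1 / ((n : ℝ) + 1) ^ 2) * (volume (Set.Ioo (-1:ℝ) 1)).toReal :=
          norm_setIntegral_le_of_norm_le_const hvolfin hbound
      _ = (2 * (C2 * C1)) * (1 / ((n : ℝ) + 1) ^ 2) := by rw [hvol]; ring
  constructor
  · calc (∑' n, a n) = ∑' n, 2 * (J n).im := tsum_congr hid
      _ = 2 * ∑' n, (J n).im := tsum_mul_left
      _ = 2 * (∑' n, J n).im := by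
          have := Complex.imCLM.map_tsum hJ_sum
          simp only [Complex.imCLM_apply] at this
          rw [this]
  · calc (∑' n, a n) ≤ ∑' n, (b n + c n) := Summable.tsum_le_tsum hab ha_sum (hb_sum.add hc_sum)
      _ = (∑' n, b n) + (∑' n, c n) := Summable.tsum_add hb_sum hc_sum
end

section
/- For every f in the domain of Δ_G (Dirichlet boundary conditions at x = ±1), one has ‖f‖_{L²(Ω)}² + ‖|D_y|^{1/2} f‖_{L²(Ω)}² ≤ ⟨(-Δ_G + 1) f, f⟩_{L²(Ω)}. -/
open MeasureTheory Complex

namespace GrushinAux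

noncomputable def eexp (n : ℤ) (y : ℝ) : ℂ := Complex.exp (-Complex.I * n * y)

lemma fourierCoeffY_eq (f : ℝ × ℝ → ℂ) (n : ℤ) (x : ℝ) :
    fourierCoeffY f n x
      = (1 / (2 * Real.pi) : ℂ) * ∫ y in (0:ℝ)..(2 * Real.pi), f (x, y) * eexp n y := rfl

lemma eexp_eq (n : ℤ) (y : ℝ) : eexp n y = Complex.exp (((-(n * y) : ℝ) : ℂ) * Complex.I) := by
  unfold eexp; congr 1; push_cast; ring

lemma norm_eexp (n : ℤ) (y : ℝ) : ‖eexp n y‖ = 1 := by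
  rw [eexp_eq]; exact Complex.norm_exp_ofReal_mul_I _

lemma continuous_eexp (n : ℤ) : Continuous (eexp n) := by unfold eexp; fun_prop

lemma hasDerivAt_eexp (n : ℤ) (y : ℝ) :
    HasDerivAt (eexp n) (-Complex.I * n * eexp n y) y := by
  have h1 : HasDerivAt (fun y : ℝ => -Complex.I * n * (y : ℂ)) (-Complex.I * n) y := by
    simpa using (Complex.ofRealCLM.hasDerivAt (x := y)).const_mul (-Complex.I * (n : ℂ))
  have h2 := h1.cexp
  unfold eexp
  convert h2 using 1
  ring

lemma eexp_two_pi (n : ℤ) : eexp n (2 * Real.pi) = 1 := by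
  rw [eexp_eq]
  have : ((-(n * (2 * Real.pi)) : ℝ) : ℂ) * Complex.I
      = ((-n : ℤ) : ℂ) * (2 * Real.pi * Complex.I) := by push_cast; ring
  rw [this, Complex.exp_int_mul_two_pi_mul_I]

lemma eexp_zero (n : ℤ) : eexp n 0 = 1 := by simp [eexp]

noncomputable def pdx (g : ℝ × ℝ → ℂ) : ℝ × ℝ → ℂ := fun p => fderiv ℝ g p ((1:ℝ), (0:ℝ))
noncomputable def pdy (g : ℝ × ℝ → ℂ) : ℝ × ℝ → ℂ := fun p => fderiv ℝ g p ((0:ℝ), (1:ℝ))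

variable {g : ℝ × ℝ → ℂ}

lemma contDiff_pdx (hg : ContDiff ℝ (⊤ : ℕ∞) g) : ContDiff ℝ (⊤ : ℕ∞) (pdx g) :=
  (ContinuousLinearMap.apply ℝ ℂ ((1:ℝ),(0:ℝ))).contDiff.comp (hg.fderiv_right (mod_cast le_top))

lemma contDiff_pdy (hg : ContDiff ℝ (⊤ : ℕ∞) g) : ContDiff ℝ (⊤ : ℕ∞) (pdy g) :=
  (ContinuousLinearMap.apply ℝ ℂ ((0:ℝ),(1:ℝ))).contDiff.comp (hg.fderiv_right (mod_cast le_top))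

lemma hasDerivAt_fst (hg : ContDiff ℝ (⊤ : ℕ∞) g) (x y : ℝ) :
    HasDerivAt (fun x => g (x, y)) (pdx g (x, y)) x :=
  (hg.differentiable (by simp) (x, y)).hasFDerivAt.comp_hasDerivAt x
    ((hasDerivAt_id x).prodMk (hasDerivAt_const x y))

lemma hasDerivAt_snd (hg : ContDiff ℝ (⊤ : ℕ∞) g) (x y : ℝ) :
    HasDerivAt (fun y => g (x, y)) (pdy g (x, y)) y :=
  (hg.differentiable (by simp) (x, y)).hasFDerivAt.comp_hasDerivAt y
    ((hasDerivAt_const y x).prodMk (hasDerivAt_id y))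

lemma pdx_eq (hg : ContDiff ℝ (⊤ : ℕ∞) g) (x y : ℝ) :
    pdx g (x, y) = deriv (fun x => g (x, y)) x := (hasDerivAt_fst hg x y).deriv.symm

lemma pdy_eq (hg : ContDiff ℝ (⊤ : ℕ∞) g) (x y : ℝ) :
    pdy g (x, y) = deriv (fun y => g (x, y)) y := (hasDerivAt_snd hg x y).deriv.symm

variable (hg : ContDiff ℝ (⊤ : ℕ∞) g) (hgper : ∀ x y, g (x, y + 2 * Real.pi) = g (x, y))
include hg hgper

lemma pdx_per : ∀ x y, pdx g (x, y + 2 * Real.pi) = pdx g (x, y) := by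
  intro x y
  rw [pdx_eq hg, pdx_eq hg]
  congr 1
  funext t
  exact hgper t y

lemma pdy_per : ∀ x y, pdy g (x, y + 2 * Real.pi) = pdy g (x, y) := by
  intro x y
  rw [pdy_eq hg, pdy_eq hg]
  rw [← deriv_comp_add_const (fun t => g (x, t)) (2 * Real.pi) y]
  congr 1
  funext t
  exact hgper x t

/-- Integration by parts in `y`. -/
lemma coeff_pdy (n : ℤ) (x : ℝ) :
    fourierCoeffY (pdy g) n x = (Complex.I * n) * fourierCoeffY g n x := by
  have hu : ∀ y ∈ Set.uIcc (0:ℝ) (2*Real.pi), HasDerivAt (fun y => g (x, y)) (pdy g (x, y)) y :=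
    fun y _ => hasDerivAt_snd hg x y
  have hv : ∀ y ∈ Set.uIcc (0:ℝ) (2*Real.pi), HasDerivAt (eexp n) (-Complex.I * n * eexp n y) y :=
    fun y _ => hasDerivAt_eexp n y
  have hcont_e : Continuous (eexp n) := continuous_eexp n
  have hu' : IntervalIntegrable (fun y => pdy g (x, y)) volume 0 (2*Real.pi) :=
    ((contDiff_pdy hg).continuous.comp (by fun_prop)).intervalIntegrable _ _
  have hv' : IntervalIntegrable (fun y => -Complex.I * n * eexp n y) volume 0 (2*Real.pi) :=
    (continuous_const.mul hcont_e).intervalIntegrable _ _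
  have ibp := intervalIntegral.integral_deriv_mul_eq_sub hu hv hu' hv'
  have hbd : g (x, 2*Real.pi) * eexp n (2*Real.pi) - g (x, 0) * eexp n 0 = 0 := by
    rw [eexp_two_pi, eexp_zero]
    have : g (x, 2*Real.pi) = g (x, 0) := by
      have := hgper x 0; simpa using this
    rw [this]; ring
  rw [hbd] at ibp
  have hint1 : IntervalIntegrable (fun y => pdy g (x, y) * eexp n y) volume 0 (2*Real.pi) :=
    (((contDiff_pdy hg).continuous.comp (by fun_prop)).mul hcont_e).intervalIntegrable _ _
  have hint2 : IntervalIntegrable (fun y => g (x, y) * (-Complex.I * n * eexp n y)) volume 0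
      (2*Real.pi) :=
    ((hg.continuous.comp (by fun_prop)).mul (continuous_const.mul hcont_e)).intervalIntegrable _ _
  rw [intervalIntegral.integral_add hint1 hint2] at ibp
  have h2 : ∫ y in (0:ℝ)..(2*Real.pi), g (x, y) * (-Complex.I * n * eexp n y)
      = (-Complex.I * n) * ∫ y in (0:ℝ)..(2*Real.pi), g (x, y) * eexp n y := by
    rw [← intervalIntegral.integral_const_mul]
    congr 1; funext y; ring
  rw [h2] at ibp
  rw [fourierCoeffY_eq, fourierCoeffY_eq]
  have : ∫ y in (0:ℝ)..(2*Real.pi), pdy g (x, y) * eexp n y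
      = (Complex.I * n) * ∫ y in (0:ℝ)..(2*Real.pi), g (x, y) * eexp n y := by
    have := eq_neg_of_add_eq_zero_left ibp
    rw [this]; ring
  rw [this]; ring

omit hg hgper in
/-- Differentiation under the integral sign. -/
lemma hasDerivAt_coeff (hg : ContDiff ℝ (⊤ : ℕ∞) g) (n : ℤ) (x₀ : ℝ) :
    HasDerivAt (fourierCoeffY g n) (fourierCoeffY (pdx g) n x₀) x₀ := by
  obtain ⟨M, hM⟩ := ((isCompact_Icc (a := x₀ - 1) (b := x₀ + 1)).prod
      (isCompact_Icc (a := (0:ℝ)) (b := 2 * Real.pi))).exists_bound_of_continuousOn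
      (contDiff_pdx hg).continuous.continuousOn
  have key := intervalIntegral.hasDerivAt_integral_of_dominated_loc_of_deriv_le
    (F := fun x y => g (x, y) * eexp n y) (F' := fun x y => pdx g (x, y) * eexp n y)
    (μ := volume) (x₀ := x₀) (a := (0:ℝ)) (b := 2 * Real.pi) (bound := fun _ => M) (s := Metric.ball x₀ 1)
    (Metric.ball_mem_nhds x₀ one_pos) ?_ ?_ ?_ ?_ ?_ ?_
  · have h := key.2
    have h2 := h.const_mul ((1 : ℂ) / (2 * Real.pi))
    have he : fourierCoeffY g n
        = fun x => (1 / (2 * Real.pi) : ℂ) * ∫ y in (0:ℝ)..(2 * Real.pi), g (x, y) * eexp n y := rfl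
    rw [he, fourierCoeffY_eq]
    exact h2
  · filter_upwards with x
    exact ((hg.continuous.comp (by fun_prop)).mul (continuous_eexp n)).aestronglyMeasurable
  · exact ((hg.continuous.comp (by fun_prop)).mul (continuous_eexp n)).intervalIntegrable _ _
  · exact (((contDiff_pdx hg).continuous.comp (by fun_prop)).mul
      (continuous_eexp n)).aestronglyMeasurable
  · filter_upwards with t ht x hx
    rw [norm_mul, norm_eexp, mul_one]
    apply hM
    constructor
    · simp only [Metric.mem_ball, Real.dist_eq] at hx
      have := abs_sub_lt_iff.mp hx
      constructor <;> linarith [this.1, this.2]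
    · have ht' : t ∈ Set.Ioc (0:ℝ) (2 * Real.pi) := by
        rwa [Set.uIoc_of_le (by positivity)] at ht
      exact Set.mem_Icc.mpr ⟨le_of_lt ht'.1, ht'.2⟩
  · exact intervalIntegrable_const
  · filter_upwards with t ht x hx
    exact (hasDerivAt_fst hg x t).mul_const _

omit hg hgper in
/-- Sup bound for a Fourier coefficient. -/
lemma coeff_norm_le {x : ℝ} {M : ℝ}
    (hM : ∀ y ∈ Set.Icc (0:ℝ) (2 * Real.pi), ‖g (x, y)‖ ≤ M) (n : ℤ) :
    ‖fourierCoeffY g n x‖ ≤ M := by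
  rw [fourierCoeffY_eq, norm_mul]
  have hpi : (0:ℝ) < 2 * Real.pi := by positivity
  have h1 : ‖(1 / (2 * Real.pi) : ℂ)‖ = 1 / (2 * Real.pi) := by
    rw [show (1 / (2 * Real.pi) : ℂ) = ((1 / (2 * Real.pi) : ℝ) : ℂ) by push_cast; ring]
    rw [Complex.norm_real, Real.norm_eq_abs, _root_.abs_of_pos (by positivity)]
  have h2 : ‖∫ y in (0:ℝ)..(2 * Real.pi), g (x, y) * eexp n y‖ ≤ M * |2 * Real.pi - 0| := by
    apply intervalIntegral.norm_integral_le_of_norm_le_const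
    intro y hy
    rw [Set.uIoc_of_le (le_of_lt hpi)] at hy
    rw [norm_mul, norm_eexp, mul_one]
    exact hM y (Set.mem_Icc.mpr ⟨le_of_lt hy.1, hy.2⟩)
  calc ‖(1 / (2 * Real.pi) : ℂ)‖ * ‖∫ y in (0:ℝ)..(2 * Real.pi), g (x, y) * eexp n y‖
      ≤ (1 / (2 * Real.pi)) * (M * |2 * Real.pi - 0|) := by
        rw [h1]; exact mul_le_mul_of_nonneg_left h2 (by positivity)
    _ = M := by rw [sub_zero, _root_.abs_of_pos hpi]; field_simp

/-- Second `y`-derivative picks up a factor `n²` in norm. -/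
lemma coeff_pdy2_norm (n : ℤ) (x : ℝ) :
    ‖fourierCoeffY (pdy (pdy g)) n x‖ = (n:ℝ)^2 * ‖fourierCoeffY g n x‖ := by
  rw [coeff_pdy (contDiff_pdy hg) (pdy_per hg hgper) n x, coeff_pdy hg hgper n x,
    show Complex.I * (n:ℂ) * (Complex.I * (n:ℂ) * fourierCoeffY g n x)
        = -(((n:ℂ))^2 * fourierCoeffY g n x) from by ring_nf; rw [Complex.I_sq]; ring,
    norm_neg, norm_mul]
  congr 1
  rw [norm_pow, Complex.norm_intCast, _root_.sq_abs]

end GrushinAux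

open GrushinAux

/-- The one-dimensional mode inequality. -/
lemma mode_ineq (g g' : ℝ → ℂ) (hd : ∀ x, HasDerivAt g (g' x) x) (hcg' : Continuous g')
    (hm : g (-1) = 0) (hp : g 1 = 0) (n : ℤ) :
    |(n : ℝ)| * ∫ x in (-1:ℝ)..1, ‖g x‖ ^ 2
      ≤ (∫ x in (-1:ℝ)..1, ‖g' x‖ ^ 2) + ∫ x in (-1:ℝ)..1, (n:ℝ)^2 * x^2 * ‖g x‖ ^ 2 := by
  have hcg : Continuous g := continuous_iff_continuousAt.mpr fun x => (hd x).continuousAt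
  set u : ℝ → ℝ := fun x => ‖g x‖ ^ 2 with hu_def
  set u' : ℝ → ℝ := fun x => 2 * ((g x).re * (g' x).re + (g x).im * (g' x).im) with hu'_def
  have hnorm : ∀ z : ℂ, ‖z‖ ^ 2 = z.re * z.re + z.im * z.im := fun z => by
    rw [Complex.sq_norm, Complex.normSq_apply]
  have hu : ∀ x, HasDerivAt u (u' x) x := by
    intro x
    have hre : HasDerivAt (fun x => (g x).re) ((g' x).re) x :=
      (Complex.reCLM.hasFDerivAt.comp_hasDerivAt x (hd x))
    have him : HasDerivAt (fun x => (g x).im) ((g' x).im) x :=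
      (Complex.imCLM.hasFDerivAt.comp_hasDerivAt x (hd x))
    have h := (hre.mul hre).add (him.mul him)
    have he : u = fun x => (g x).re * (g x).re + (g x).im * (g x).im :=
      funext fun x => hnorm (g x)
    rw [he]
    refine h.congr_deriv ?_
    simp only [hu'_def]
    ring
  have hcu : Continuous u := by fun_prop
  have hcu' : Continuous u' := by fun_prop
  have hxu : ∀ x, HasDerivAt (fun x => x * u x) (u x + x * u' x) x := by
    intro x
    have h := (hasDerivAt_id x).mul (hu x)
    simp only [id_eq] at h
    refine h.congr_deriv ?_
    ring
  have hzero : ∫ x in (-1:ℝ)..1, (u x + x * u' x) = 0 := by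
    rw [intervalIntegral.integral_eq_sub_of_hasDerivAt (fun x _ => hxu x)
      ((hcu.add (continuous_id.mul hcu')).intervalIntegrable _ _)]
    simp [hu_def, hm, hp]
  have hiu : IntervalIntegrable u volume (-1) 1 := hcu.intervalIntegrable _ _
  have hixu' : IntervalIntegrable (fun x => x * u' x) volume (-1) 1 :=
    (continuous_id.mul hcu').intervalIntegrable _ _
  have hsplit : (∫ x in (-1:ℝ)..1, u x) = -∫ x in (-1:ℝ)..1, x * u' x := by
    rw [intervalIntegral.integral_add hiu hixu'] at hzero
    linarith
  have hptw : ∀ x, |(n:ℝ)| * |x * u' x| ≤ ‖g' x‖ ^ 2 + (n:ℝ)^2 * x^2 * ‖g x‖ ^ 2 := by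
    intro x
    have h1 : |u' x| ≤ 2 * (‖g x‖ * ‖g' x‖) := by
      have he : u' x = 2 * ((starRingEnd ℂ) (g x) * g' x).re := by
        simp [hu'_def, Complex.mul_re, Complex.conj_re, Complex.conj_im]
        try ring
      rw [he, abs_mul, _root_.abs_two]
      have := Complex.abs_re_le_norm ((starRingEnd ℂ) (g x) * g' x)
      rw [norm_mul, Complex.norm_conj] at this
      calc (2:ℝ) * |((starRingEnd ℂ) (g x) * g' x).re|
          ≤ 2 * (‖g x‖ * ‖g' x‖) := by linarith
        _ = 2 * (‖g x‖ * ‖g' x‖) := rfl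
    have h2 : |(n:ℝ)| * |x * u' x| ≤ 2 * ((|(n:ℝ)| * |x| * ‖g x‖) * ‖g' x‖) := by
      rw [abs_mul]
      calc |(n:ℝ)| * (|x| * |u' x|) ≤ |(n:ℝ)| * (|x| * (2 * (‖g x‖ * ‖g' x‖))) := by
            apply mul_le_mul_of_nonneg_left _ (abs_nonneg _)
            exact mul_le_mul_of_nonneg_left h1 (abs_nonneg _)
        _ = 2 * ((|(n:ℝ)| * |x| * ‖g x‖) * ‖g' x‖) := by ring
    have h3 := two_mul_le_add_sq (|(n:ℝ)| * |x| * ‖g x‖) ‖g' x‖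
    have h4 : (|(n:ℝ)| * |x| * ‖g x‖) ^ 2 = (n:ℝ)^2 * x^2 * ‖g x‖ ^ 2 := by
      rw [mul_pow, mul_pow, _root_.sq_abs, _root_.sq_abs]
    nlinarith [h2, h3, h4]
  have habs : |(n:ℝ)| * ∫ x in (-1:ℝ)..1, u x ≤ ∫ x in (-1:ℝ)..1, |(n:ℝ)| * |x * u' x| := by
    have hnn : (0:ℝ) ≤ ∫ x in (-1:ℝ)..1, u x :=
      intervalIntegral.integral_nonneg (by norm_num) (fun x _ => sq_nonneg _)
    have heq : |(n:ℝ)| * ∫ x in (-1:ℝ)..1, u x = |(n:ℝ)| * |∫ x in (-1:ℝ)..1, x * u' x| := by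
      rw [← _root_.abs_of_nonneg hnn, hsplit, abs_neg]
    rw [heq]
    have hle := intervalIntegral.abs_integral_le_integral_abs (μ := volume)
      (f := fun x => x * u' x) (a := (-1:ℝ)) (b := 1) (by norm_num)
    calc |(n:ℝ)| * |∫ x in (-1:ℝ)..1, x * u' x| ≤ |(n:ℝ)| * ∫ x in (-1:ℝ)..1, |x * u' x| :=
          mul_le_mul_of_nonneg_left hle (abs_nonneg _)
      _ = ∫ x in (-1:ℝ)..1, |(n:ℝ)| * |x * u' x| := (intervalIntegral.integral_const_mul _ _).symm
  have hmono : (∫ x in (-1:ℝ)..1, |(n:ℝ)| * |x * u' x|)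
      ≤ ∫ x in (-1:ℝ)..1, (‖g' x‖ ^ 2 + (n:ℝ)^2 * x^2 * ‖g x‖ ^ 2) := by
    apply intervalIntegral.integral_mono_on (by norm_num)
    · exact (continuous_const.mul ((continuous_id.mul hcu').abs)).intervalIntegrable _ _
    · apply Continuous.intervalIntegrable; fun_prop
    · exact fun x _ => hptw x
  have hfin : (∫ x in (-1:ℝ)..1, (‖g' x‖ ^ 2 + (n:ℝ)^2 * x^2 * ‖g x‖ ^ 2))
      = (∫ x in (-1:ℝ)..1, ‖g' x‖ ^ 2) + ∫ x in (-1:ℝ)..1, (n:ℝ)^2 * x^2 * ‖g x‖ ^ 2 := by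
    apply intervalIntegral.integral_add
    · apply Continuous.intervalIntegrable; fun_prop
    · apply Continuous.intervalIntegrable; fun_prop
  calc |(n:ℝ)| * ∫ x in (-1:ℝ)..1, ‖g x‖ ^ 2 ≤ ∫ x in (-1:ℝ)..1, |(n:ℝ)| * |x * u' x| := habs
    _ ≤ _ := hmono
    _ = _ := hfin

lemma integral_Ioo_le {h : ℝ → ℝ} (hc : Continuous h) {m : ℝ}
    (hm : ∀ x ∈ Set.Icc (-1:ℝ) 1, h x ≤ m) :
    ∫ x in Set.Ioo (-1:ℝ) 1, h x ≤ 2 * m := by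
  have hint : IntegrableOn h (Set.Ioo (-1:ℝ) 1) :=
    (hc.integrableOn_Icc).mono_set Set.Ioo_subset_Icc_self
  have hconst : IntegrableOn (fun _ : ℝ => m) (Set.Ioo (-1:ℝ) 1) := by
    exact integrableOn_const (by rw [Real.volume_Ioo]; exact ENNReal.ofReal_ne_top)
  have h1 := setIntegral_mono_on hint hconst measurableSet_Ioo
    (fun x hx => hm x (Set.Ioo_subset_Icc_self hx))
  have h2 : ∫ _ in Set.Ioo (-1:ℝ) 1, m = 2 * m := by
    rw [setIntegral_const, Real.volume_real_Ioo, smul_eq_mul]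
    norm_num
  linarith

lemma ioo_eq_interval (h : ℝ → ℝ) :
    ∫ x in Set.Ioo (-1:ℝ) 1, h x = ∫ x in (-1:ℝ)..1, h x := by
  rw [intervalIntegral.integral_of_le (by norm_num : (-1:ℝ) ≤ 1), integral_Ioc_eq_integral_Ioo]

lemma summable_Q : Summable (fun n : ℤ => 1 / (1 + (n:ℝ)^2)) := by
  have h2 : Summable (fun n : ℤ => 1 / (n:ℝ)^2) := Real.summable_one_div_int_pow.mpr one_lt_two
  apply Summable.of_norm_bounded_eventually h2
  rw [Filter.eventually_cofinite]
  apply Set.Finite.subset (Set.finite_singleton (0:ℤ))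
  intro n hn
  simp only [Set.mem_setOf_eq] at hn
  simp only [Set.mem_singleton_iff]
  by_contra h0
  apply hn
  have hne : ((n:ℝ)) ≠ 0 := Int.cast_ne_zero.mpr h0
  have hn2 : (0:ℝ) < (n:ℝ)^2 := by positivity
  rw [Real.norm_eq_abs, _root_.abs_of_pos (by positivity)]
  exact one_div_le_one_div_of_le hn2 (by linarith)

/-- Coercivity estimate: for every `f` in the domain of the Grushin Laplacian `Δ_G` on
`Ω = (-1,1)×𝕋` (Dirichlet boundary conditions at `x = ±1`),
`‖f‖² + ‖|D_y|^{1/2} f‖² ≤ ⟨(-Δ_G + 1) f, f⟩ = ‖f‖² + ‖∂_x f‖² + ‖x ∂_y f‖²`.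
Everything is expressed mode by mode through the Fourier coefficients in `y`
(the common factor `2π` in all `L²(Ω)` pairings has been cancelled). -/
theorem stmt_1 (f : ℝ × ℝ → ℂ)
    (hf : ContDiff ℝ (⊤ : ℕ∞) f)
    (hper : ∀ x y, f (x, y + 2 * Real.pi) = f (x, y))
    (hbc : ∀ y, f (-1, y) = 0 ∧ f (1, y) = 0) :
    (∑' n : ℤ, (1 + |(n : ℝ)|) * ∫ x in Set.Ioo (-1 : ℝ) 1, ‖fourierCoeffY f n x‖ ^ 2)
      ≤ (∑' n : ℤ, ∫ x in Set.Ioo (-1 : ℝ) 1, ‖fourierCoeffY f n x‖ ^ 2)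
        + (∑' n : ℤ, ∫ x in Set.Ioo (-1 : ℝ) 1, ‖deriv (fourierCoeffY f n) x‖ ^ 2)
        + (∑' n : ℤ, ∫ x in Set.Ioo (-1 : ℝ) 1,
            (n : ℝ) ^ 2 * x ^ 2 * ‖fourierCoeffY f n x‖ ^ 2) := by
  -- abbreviations for the three families of integrals
  have hQpos : ∀ n : ℤ, (0:ℝ) < 1 + (n:ℝ)^2 := fun n => by positivity
  have hQ0 : ∀ n : ℤ, (0:ℝ) ≤ 1 / (1 + (n:ℝ)^2) := fun n => by positivity
  have hQ1 : ∀ n : ℤ, 1 / (1 + (n:ℝ)^2) ≤ 1 := fun n => by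
    rw [div_le_one (hQpos n)]; nlinarith [sq_nonneg ((n:ℝ))]
  have hQn : ∀ n : ℤ, (n:ℝ)^2 * (1 / (1 + (n:ℝ)^2)) ≤ 1 := fun n => by
    rw [mul_one_div, div_le_one (hQpos n)]; linarith
  -- smoothness and periodicity of the various derivatives
  have hpdyf := contDiff_pdy hf
  have hpdxf := contDiff_pdx hf
  have hper_y := pdy_per hf hper
  have hper_x := pdx_per hf hper
  have hg1 : ContDiff ℝ (⊤ : ℕ∞) (pdy (pdy f)) := contDiff_pdy hpdyf
  have hg3 : ContDiff ℝ (⊤ : ℕ∞) (pdy (pdy (pdx f))) := contDiff_pdy (contDiff_pdy hpdxf)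
  -- sup bounds on the compact set K
  obtain ⟨C₀, hC₀⟩ := ((isCompact_Icc (a := (-1:ℝ)) (b := 1)).prod
    (isCompact_Icc (a := (0:ℝ)) (b := 2*Real.pi))).exists_bound_of_continuousOn
    hf.continuous.continuousOn
  obtain ⟨C₂, hC₂⟩ := ((isCompact_Icc (a := (-1:ℝ)) (b := 1)).prod
    (isCompact_Icc (a := (0:ℝ)) (b := 2*Real.pi))).exists_bound_of_continuousOn
    hg1.continuous.continuousOn
  obtain ⟨C₁, hC₁⟩ := ((isCompact_Icc (a := (-1:ℝ)) (b := 1)).prod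
    (isCompact_Icc (a := (0:ℝ)) (b := 2*Real.pi))).exists_bound_of_continuousOn
    hpdxf.continuous.continuousOn
  obtain ⟨C₃, hC₃⟩ := ((isCompact_Icc (a := (-1:ℝ)) (b := 1)).prod
    (isCompact_Icc (a := (0:ℝ)) (b := 2*Real.pi))).exists_bound_of_continuousOn
    hg3.continuous.continuousOn
  set R : ℝ := max (C₀ + C₂) (max (C₁ + C₃) 1) with hRdef
  have hR1 : (1:ℝ) ≤ R := le_trans (le_max_right _ _) (le_max_right _ _)
  have hR0 : (0:ℝ) ≤ R := le_trans zero_le_one hR1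
  -- decay of the coefficients
  have hcb : ∀ n : ℤ, ∀ x ∈ Set.Icc (-1:ℝ) 1,
      ‖fourierCoeffY f n x‖ ≤ R * (1 / (1 + (n:ℝ)^2)) := by
    intro n x hx
    have h0 : ‖fourierCoeffY f n x‖ ≤ C₀ :=
      coeff_norm_le (fun y hy => hC₀ (x, y) ⟨hx, hy⟩) n
    have h2' : ‖fourierCoeffY (pdy (pdy f)) n x‖ ≤ C₂ :=
      coeff_norm_le (fun y hy => hC₂ (x, y) ⟨hx, hy⟩) n
    have h2 : (n:ℝ)^2 * ‖fourierCoeffY f n x‖ ≤ C₂ := by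
      rw [← coeff_pdy2_norm hf hper]; exact h2'
    rw [mul_one_div, le_div_iff₀ (hQpos n)]
    have hRle : C₀ + C₂ ≤ R := le_max_left _ _
    nlinarith [h0, h2]
  have hcb' : ∀ n : ℤ, ∀ x ∈ Set.Icc (-1:ℝ) 1,
      ‖fourierCoeffY (pdx f) n x‖ ≤ R * (1 / (1 + (n:ℝ)^2)) := by
    intro n x hx
    have h0 : ‖fourierCoeffY (pdx f) n x‖ ≤ C₁ :=
      coeff_norm_le (fun y hy => hC₁ (x, y) ⟨hx, hy⟩) n
    have h2' : ‖fourierCoeffY (pdy (pdy (pdx f))) n x‖ ≤ C₃ :=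
      coeff_norm_le (fun y hy => hC₃ (x, y) ⟨hx, hy⟩) n
    have h2 : (n:ℝ)^2 * ‖fourierCoeffY (pdx f) n x‖ ≤ C₃ := by
      rw [← coeff_pdy2_norm hpdxf hper_x]; exact h2'
    rw [mul_one_div, le_div_iff₀ (hQpos n)]
    have hRle : C₁ + C₃ ≤ R := le_trans (le_max_left _ _) (le_max_right _ _)
    nlinarith [h0, h2]
  -- continuity and derivatives of the coefficients
  have hdc : ∀ n : ℤ, deriv (fourierCoeffY f n) = fourierCoeffY (pdx f) n := fun n =>
    funext fun x => (hasDerivAt_coeff hf n x).deriv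
  have hcont_c : ∀ n : ℤ, Continuous (fourierCoeffY f n) := fun n =>
    continuous_iff_continuousAt.mpr fun x => (hasDerivAt_coeff hf n x).continuousAt
  have hcont_c' : ∀ n : ℤ, Continuous (fourierCoeffY (pdx f) n) := fun n =>
    continuous_iff_continuousAt.mpr fun x => (hasDerivAt_coeff hpdxf n x).continuousAt
  -- boundary values vanish
  have hbz : ∀ n : ℤ, fourierCoeffY f n (-1) = 0 ∧ fourierCoeffY f n 1 = 0 := by
    intro n
    constructor
    · rw [fourierCoeffY_eq]
      have hz : (fun y => f (-1, y) * eexp n y) = fun _ => (0:ℂ) :=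
        funext fun y => by rw [(hbc y).1, zero_mul]
      rw [hz]
      simp
    · rw [fourierCoeffY_eq]
      have hz : (fun y => f (1, y) * eexp n y) = fun _ => (0:ℂ) :=
        funext fun y => by rw [(hbc y).2, zero_mul]
      rw [hz]
      simp
  -- bounds on the three integral families
  have hAle : ∀ n : ℤ, (∫ x in Set.Ioo (-1:ℝ) 1, ‖fourierCoeffY f n x‖ ^ 2)
      ≤ (2 * R^2) * (1 / (1 + (n:ℝ)^2)) := by
    intro n
    have hb := integral_Ioo_le (h := fun x => ‖fourierCoeffY f n x‖ ^ 2)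
      (by have := hcont_c n; fun_prop)
      (m := (R * (1 / (1 + (n:ℝ)^2)))^2)
      (fun x hx => pow_le_pow_left₀ (norm_nonneg _) (hcb n x hx) 2)
    refine le_trans hb ?_
    have hQsq : (1 / (1 + (n:ℝ)^2))^2 ≤ 1 / (1 + (n:ℝ)^2) := by nlinarith [hQ0 n, hQ1 n]
    nlinarith [mul_le_mul_of_nonneg_left hQsq (sq_nonneg R)]
  have hBle : ∀ n : ℤ, (∫ x in Set.Ioo (-1:ℝ) 1, ‖deriv (fourierCoeffY f n) x‖ ^ 2)
      ≤ (2 * R^2) * (1 / (1 + (n:ℝ)^2)) := by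
    intro n
    rw [hdc n]
    have hb := integral_Ioo_le (h := fun x => ‖fourierCoeffY (pdx f) n x‖ ^ 2)
      (by have := hcont_c' n; fun_prop)
      (m := (R * (1 / (1 + (n:ℝ)^2)))^2)
      (fun x hx => pow_le_pow_left₀ (norm_nonneg _) (hcb' n x hx) 2)
    refine le_trans hb ?_
    have hQsq : (1 / (1 + (n:ℝ)^2))^2 ≤ 1 / (1 + (n:ℝ)^2) := by nlinarith [hQ0 n, hQ1 n]
    nlinarith [mul_le_mul_of_nonneg_left hQsq (sq_nonneg R)]
  have hDle : ∀ n : ℤ, (∫ x in Set.Ioo (-1:ℝ) 1, (n:ℝ)^2 * x^2 * ‖fourierCoeffY f n x‖ ^ 2)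
      ≤ (2 * R^2) * (1 / (1 + (n:ℝ)^2)) := by
    intro n
    have hb := integral_Ioo_le (h := fun x => (n:ℝ)^2 * x^2 * ‖fourierCoeffY f n x‖ ^ 2)
      (by have := hcont_c n; fun_prop)
      (m := (n:ℝ)^2 * (R * (1 / (1 + (n:ℝ)^2)))^2) ?_
    · refine le_trans hb ?_
      have hkey := mul_le_mul_of_nonneg_right (hQn n) (hQ0 n)
      nlinarith [mul_le_mul_of_nonneg_left hkey (sq_nonneg R)]
    · intro x hx
      have hx2 : x^2 ≤ 1 := by
        rcases Set.mem_Icc.mp hx with ⟨h1, h2⟩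
        nlinarith
      have hc2 : ‖fourierCoeffY f n x‖^2 ≤ (R * (1 / (1 + (n:ℝ)^2)))^2 :=
        pow_le_pow_left₀ (norm_nonneg _) (hcb n x hx) 2
      nlinarith [mul_le_mul_of_nonneg_left hc2 (sq_nonneg ((n:ℝ))),
        mul_le_mul_of_nonneg_right hx2 (sq_nonneg (‖fourierCoeffY f n x‖)),
        sq_nonneg ((n:ℝ))]
  -- nonnegativity
  have hA0 : ∀ n : ℤ, (0:ℝ) ≤ ∫ x in Set.Ioo (-1:ℝ) 1, ‖fourierCoeffY f n x‖ ^ 2 := fun n =>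
    setIntegral_nonneg measurableSet_Ioo fun x _ => by positivity
  have hB0 : ∀ n : ℤ, (0:ℝ) ≤ ∫ x in Set.Ioo (-1:ℝ) 1, ‖deriv (fourierCoeffY f n) x‖ ^ 2 :=
    fun n => setIntegral_nonneg measurableSet_Ioo fun x _ => by positivity
  have hD0 : ∀ n : ℤ, (0:ℝ) ≤ ∫ x in Set.Ioo (-1:ℝ) 1,
      (n:ℝ)^2 * x^2 * ‖fourierCoeffY f n x‖ ^ 2 := fun n =>
    setIntegral_nonneg measurableSet_Ioo fun x _ => by positivity
  -- summability
  have hsumQ : Summable (fun n : ℤ => (2 * R^2) * (1 / (1 + (n:ℝ)^2))) :=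
    summable_Q.mul_left _
  have hsumA : Summable (fun n : ℤ => ∫ x in Set.Ioo (-1:ℝ) 1, ‖fourierCoeffY f n x‖ ^ 2) :=
    Summable.of_nonneg_of_le hA0 hAle hsumQ
  have hsumB : Summable (fun n : ℤ =>
      ∫ x in Set.Ioo (-1:ℝ) 1, ‖deriv (fourierCoeffY f n) x‖ ^ 2) :=
    Summable.of_nonneg_of_le hB0 hBle hsumQ
  have hsumD : Summable (fun n : ℤ =>
      ∫ x in Set.Ioo (-1:ℝ) 1, (n:ℝ)^2 * x^2 * ‖fourierCoeffY f n x‖ ^ 2) :=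
    Summable.of_nonneg_of_le hD0 hDle hsumQ
  have hsumRHS : Summable (fun n : ℤ =>
      (∫ x in Set.Ioo (-1:ℝ) 1, ‖fourierCoeffY f n x‖ ^ 2)
      + (∫ x in Set.Ioo (-1:ℝ) 1, ‖deriv (fourierCoeffY f n) x‖ ^ 2)
      + (∫ x in Set.Ioo (-1:ℝ) 1, (n:ℝ)^2 * x^2 * ‖fourierCoeffY f n x‖ ^ 2)) :=
    (hsumA.add hsumB).add hsumD
  -- per-mode inequality
  have hper_n : ∀ n : ℤ, (1 + |(n:ℝ)|) * (∫ x in Set.Ioo (-1:ℝ) 1, ‖fourierCoeffY f n x‖ ^ 2)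
      ≤ (∫ x in Set.Ioo (-1:ℝ) 1, ‖fourierCoeffY f n x‖ ^ 2)
      + (∫ x in Set.Ioo (-1:ℝ) 1, ‖deriv (fourierCoeffY f n) x‖ ^ 2)
      + (∫ x in Set.Ioo (-1:ℝ) 1, (n:ℝ)^2 * x^2 * ‖fourierCoeffY f n x‖ ^ 2) := by
    intro n
    have hmode := mode_ineq (fourierCoeffY f n) (fourierCoeffY (pdx f) n)
      (fun x => hasDerivAt_coeff hf n x) (hcont_c' n) (hbz n).1 (hbz n).2 n
    have h1 : |(n:ℝ)| * (∫ x in Set.Ioo (-1:ℝ) 1, ‖fourierCoeffY f n x‖ ^ 2)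
        ≤ (∫ x in Set.Ioo (-1:ℝ) 1, ‖deriv (fourierCoeffY f n) x‖ ^ 2)
        + (∫ x in Set.Ioo (-1:ℝ) 1, (n:ℝ)^2 * x^2 * ‖fourierCoeffY f n x‖ ^ 2) := by
      rw [hdc n, ioo_eq_interval (fun x => ‖fourierCoeffY f n x‖ ^ 2),
        ioo_eq_interval (fun x => ‖fourierCoeffY (pdx f) n x‖ ^ 2),
        ioo_eq_interval (fun x => (n:ℝ)^2 * x^2 * ‖fourierCoeffY f n x‖ ^ 2)]
      exact hmode
    nlinarith [hA0 n, h1, abs_nonneg ((n:ℝ))]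
  -- summability of the left-hand side
  have hsumL : Summable (fun n : ℤ =>
      (1 + |(n:ℝ)|) * ∫ x in Set.Ioo (-1:ℝ) 1, ‖fourierCoeffY f n x‖ ^ 2) :=
    Summable.of_nonneg_of_le
      (fun n => mul_nonneg (by positivity) (hA0 n)) hper_n hsumRHS
  -- conclusion
  calc (∑' n : ℤ, (1 + |(n : ℝ)|) * ∫ x in Set.Ioo (-1 : ℝ) 1, ‖fourierCoeffY f n x‖ ^ 2)
      ≤ ∑' n : ℤ, ((∫ x in Set.Ioo (-1:ℝ) 1, ‖fourierCoeffY f n x‖ ^ 2)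
          + (∫ x in Set.Ioo (-1:ℝ) 1, ‖deriv (fourierCoeffY f n) x‖ ^ 2)
          + (∫ x in Set.Ioo (-1:ℝ) 1, (n:ℝ)^2 * x^2 * ‖fourierCoeffY f n x‖ ^ 2)) :=
        Summable.tsum_le_tsum hper_n hsumL hsumRHS
    _ = (∑' n : ℤ, ∫ x in Set.Ioo (-1 : ℝ) 1, ‖fourierCoeffY f n x‖ ^ 2)
        + (∑' n : ℤ, ∫ x in Set.Ioo (-1 : ℝ) 1, ‖deriv (fourierCoeffY f n) x‖ ^ 2)
        + (∑' n : ℤ, ∫ x in Set.Ioo (-1 : ℝ) 1,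
            (n : ℝ) ^ 2 * x ^ 2 * ‖fourierCoeffY f n x‖ ^ 2) := by
        rw [Summable.tsum_add (hsumA.add hsumB) hsumD, Summable.tsum_add hsumA hsumB]
end

section
/- Let f₀(z) = e^{-z²/2} and let f₁ be the solution of f₁'' = (z² - 1)f₁ - f₀ with f₁(0) = f₁'(0) = 0. Then f₁(z) < 0 for all z > 0, and f₁(z) = e^{z²/2}( -√π/(4z) + O(z^{-3}) ) as z → +∞. -/
open MeasureTheory Real

noncomputable def Phi9 (z : ℝ) : ℝ := ∫ y in (0:ℝ)..z, Real.exp (-y^2)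
noncomputable def Gi9 (z : ℝ) : ℝ := ∫ y in (0:ℝ)..z, Phi9 y * Real.exp (y^2)

lemma cont_g9 : Continuous (fun y : ℝ => Real.exp (-y^2)) := by fun_prop

lemma hasDerivAt_Phi9 (z : ℝ) : HasDerivAt Phi9 (Real.exp (-z^2)) z :=
  intervalIntegral.integral_hasDerivAt_right (cont_g9.intervalIntegrable _ _)
    cont_g9.aestronglyMeasurable.stronglyMeasurableAtFilter cont_g9.continuousAt

lemma cont_Phi9 : Continuous Phi9 :=
  continuous_iff_continuousAt.mpr fun z => (hasDerivAt_Phi9 z).continuousAt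

lemma cont_gi9 : Continuous (fun y : ℝ => Phi9 y * Real.exp (y^2)) := by
  exact cont_Phi9.mul (by fun_prop)

lemma hasDerivAt_Gi9 (z : ℝ) : HasDerivAt Gi9 (Phi9 z * Real.exp (z^2)) z :=
  intervalIntegral.integral_hasDerivAt_right (cont_gi9.intervalIntegrable _ _)
    cont_gi9.aestronglyMeasurable.stronglyMeasurableAtFilter cont_gi9.continuousAt

lemma Phi9_pos {z : ℝ} (hz : 0 < z) : 0 < Phi9 z :=
  intervalIntegral.intervalIntegral_pos_of_pos (cont_g9.intervalIntegrable _ _)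
    (fun x => Real.exp_pos _) hz

lemma Phi9_nonneg {z : ℝ} (hz : 0 ≤ z) : 0 ≤ Phi9 z := by
  rcases hz.eq_or_lt with h | h
  · simp [Phi9, ← h]
  · exact (Phi9_pos h).le

lemma Gi9_pos {z : ℝ} (hz : 0 < z) : 0 < Gi9 z :=
  intervalIntegral.intervalIntegral_pos_of_pos_on (cont_gi9.intervalIntegrable _ _)
    (fun x hx => mul_pos (Phi9_pos hx.1) (Real.exp_pos _)) hz

lemma keyA9 (f₁ : ℝ → ℝ) (hsm : ContDiff ℝ (⊤ : ℕ∞) f₁)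
    (hode : ∀ z : ℝ, deriv (deriv f₁) z = (z ^ 2 - 1) * f₁ z - Real.exp (-z ^ 2 / 2))
    (h0 : f₁ 0 = 0) (h0' : deriv f₁ 0 = 0) :
    ∀ z : ℝ, deriv f₁ z + z * f₁ z = -(Phi9 z * Real.exp (z ^ 2 / 2)) := by
  have hd1 : ∀ z, HasDerivAt f₁ (deriv f₁ z) z := fun z =>
    ((hsm.differentiable (by simp)) z).hasDerivAt
  have hsm' : ContDiff ℝ (⊤ : ℕ∞) (deriv f₁) := (contDiff_infty_iff_deriv.mp (hsm.of_le (mod_cast le_top))).2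
  have hd2 : ∀ z, HasDerivAt (deriv f₁) (deriv (deriv f₁) z) z := fun z =>
    ((hsm'.differentiable (by simp)) z).hasDerivAt
  set q : ℝ → ℝ := fun z => (deriv f₁ z + z * f₁ z) * Real.exp (-z ^ 2 / 2) + Phi9 z with hqdef
  have hdq : ∀ z, HasDerivAt q 0 z := by
    intro z
    have e1 : HasDerivAt (fun z : ℝ => Real.exp (-z ^ 2 / 2))
        (Real.exp (-z ^ 2 / 2) * (-z)) z := by
      have h : HasDerivAt (fun z : ℝ => -z ^ 2 / 2) (-z) z := by
        have := ((hasDerivAt_pow 2 z).neg.div_const 2)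
        simpa using this.congr_deriv (by ring)
      exact h.exp
    have inner : HasDerivAt (fun z => deriv f₁ z + z * f₁ z)
        (deriv (deriv f₁) z + (1 * f₁ z + z * deriv f₁ z)) z :=
      (hd2 z).add ((hasDerivAt_id z).mul (hd1 z))
    have hq : HasDerivAt q
        ((deriv (deriv f₁) z + (1 * f₁ z + z * deriv f₁ z)) * Real.exp (-z ^ 2 / 2)
          + (deriv f₁ z + z * f₁ z) * (Real.exp (-z ^ 2 / 2) * (-z))
          + Real.exp (-z ^ 2)) z := (inner.mul e1).add (hasDerivAt_Phi9 z)
    have hexp : Real.exp (-z ^ 2 / 2) * Real.exp (-z ^ 2 / 2) = Real.exp (-z ^ 2) := by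
      rw [← Real.exp_add]; ring_nf
    have : (deriv (deriv f₁) z + (1 * f₁ z + z * deriv f₁ z)) * Real.exp (-z ^ 2 / 2)
          + (deriv f₁ z + z * f₁ z) * (Real.exp (-z ^ 2 / 2) * (-z))
          + Real.exp (-z ^ 2) = 0 := by
      rw [hode z]; linear_combination -hexp
    rwa [this] at hq
  have hcq : ∀ z, q z = q 0 := fun z =>
    is_const_of_deriv_eq_zero (fun x => (hdq x).differentiableAt) (fun x => (hdq x).deriv) z 0
  have hq0 : q 0 = 0 := by simp [hqdef, h0, h0', Phi9]
  intro z
  have h1 : (deriv f₁ z + z * f₁ z) * Real.exp (-z ^ 2 / 2) = -Phi9 z := by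
    have := (hcq z).trans hq0
    simp only [hqdef] at this
    linarith
  have h2 : -z ^ 2 / 2 + z ^ 2 / 2 = 0 := by ring
  calc deriv f₁ z + z * f₁ z
      = ((deriv f₁ z + z * f₁ z) * Real.exp (-z ^ 2 / 2)) * Real.exp (z ^ 2 / 2) := by
        rw [mul_assoc, ← Real.exp_add, h2, Real.exp_zero, mul_one]
    _ = -(Phi9 z * Real.exp (z ^ 2 / 2)) := by rw [h1]; ring

lemma keyB9 (f₁ : ℝ → ℝ) (hsm : ContDiff ℝ (⊤ : ℕ∞) f₁)
    (hode : ∀ z : ℝ, deriv (deriv f₁) z = (z ^ 2 - 1) * f₁ z - Real.exp (-z ^ 2 / 2))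
    (h0 : f₁ 0 = 0) (h0' : deriv f₁ 0 = 0) :
    ∀ z : ℝ, f₁ z = -Real.exp (-z ^ 2 / 2) * Gi9 z := by
  have hA := keyA9 f₁ hsm hode h0 h0'
  have hd1 : ∀ z, HasDerivAt f₁ (deriv f₁ z) z := fun z =>
    ((hsm.differentiable (by simp)) z).hasDerivAt
  set r : ℝ → ℝ := fun z => f₁ z * Real.exp (z ^ 2 / 2) + Gi9 z with hrdef
  have hdr : ∀ z, HasDerivAt r 0 z := by
    intro z
    have e1 : HasDerivAt (fun z : ℝ => Real.exp (z ^ 2 / 2))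
        (Real.exp (z ^ 2 / 2) * z) z := by
      have h : HasDerivAt (fun z : ℝ => z ^ 2 / 2) z z := by
        have := ((hasDerivAt_pow 2 z).div_const 2)
        simpa using this.congr_deriv (by ring)
      exact h.exp
    have hr : HasDerivAt r
        (deriv f₁ z * Real.exp (z ^ 2 / 2) + f₁ z * (Real.exp (z ^ 2 / 2) * z)
          + Phi9 z * Real.exp (z ^ 2)) z := ((hd1 z).mul e1).add (hasDerivAt_Gi9 z)
    have hexp : Real.exp (z ^ 2 / 2) * Real.exp (z ^ 2 / 2) = Real.exp (z ^ 2) := by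
      rw [← Real.exp_add]; ring_nf
    have : deriv f₁ z * Real.exp (z ^ 2 / 2) + f₁ z * (Real.exp (z ^ 2 / 2) * z)
          + Phi9 z * Real.exp (z ^ 2) = 0 := by
      have h := hA z
      linear_combination Real.exp (z ^ 2 / 2) * h - Phi9 z * hexp
    rwa [this] at hr
  have hcr : ∀ z, r z = r 0 := fun z =>
    is_const_of_deriv_eq_zero (fun x => (hdr x).differentiableAt) (fun x => (hdr x).deriv) z 0
  have hr0 : r 0 = 0 := by simp [hrdef, h0, Gi9]
  intro z
  have h1 : f₁ z * Real.exp (z ^ 2 / 2) = -Gi9 z := by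
    have := (hcr z).trans hr0
    simp only [hrdef] at this
    linarith
  have h2 : z ^ 2 / 2 + -z ^ 2 / 2 = 0 := by ring
  calc f₁ z = (f₁ z * Real.exp (z ^ 2 / 2)) * Real.exp (-z ^ 2 / 2) := by
        rw [mul_assoc, ← Real.exp_add, h2, Real.exp_zero, mul_one]
    _ = -Real.exp (-z ^ 2 / 2) * Gi9 z := by rw [h1]; ring

lemma gauss_int9 : Integrable (fun y : ℝ => Real.exp (-y ^ 2)) := by
  have := integrable_exp_neg_mul_sq (b := 1) one_pos
  simpa using this

lemma gauss_total9 : ∫ y in Set.Ioi (0:ℝ), Real.exp (-y ^ 2) = Real.sqrt Real.pi / 2 := by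
  have := integral_gaussian_Ioi 1
  simpa using this

lemma Phi9_tail {z : ℝ} (hz : 0 ≤ z) :
    Real.sqrt Real.pi / 2 - Phi9 z = ∫ y in Set.Ioi z, Real.exp (-y ^ 2) := by
  have hsplit : (∫ y in Set.Ioi (0:ℝ), Real.exp (-y ^ 2))
      = (∫ y in Set.Ioc (0:ℝ) z, Real.exp (-y ^ 2)) + ∫ y in Set.Ioi z, Real.exp (-y ^ 2) := by
    rw [← setIntegral_union (Set.Ioc_disjoint_Ioi le_rfl) measurableSet_Ioi
      (gauss_int9.integrableOn) (gauss_int9.integrableOn), Set.Ioc_union_Ioi_eq_Ioi hz]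
  have hPhi : Phi9 z = ∫ y in Set.Ioc (0:ℝ) z, Real.exp (-y ^ 2) :=
    intervalIntegral.integral_of_le hz
  rw [← gauss_total9, hsplit, hPhi]; ring

lemma Phi9_le {z : ℝ} (hz : 0 ≤ z) : Phi9 z ≤ Real.sqrt Real.pi / 2 := by
  have h := Phi9_tail hz
  have : 0 ≤ ∫ y in Set.Ioi z, Real.exp (-y ^ 2) :=
    setIntegral_nonneg measurableSet_Ioi (fun y _ => (Real.exp_pos _).le)
  linarith

lemma Phi9_tail_le {z : ℝ} (hz : 1 ≤ z) :
    Real.sqrt Real.pi / 2 - Phi9 z ≤ Real.exp (-z ^ 2) := by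
  have h0 : (0:ℝ) ≤ z := by linarith
  rw [Phi9_tail h0]
  have hint : IntegrableOn (fun y : ℝ => y * Real.exp (-y ^ 2)) (Set.Ioi z) := by
    have h := integrable_mul_exp_neg_mul_sq (b := 1) one_pos
    have h2 : Integrable (fun y : ℝ => y * Real.exp (-y ^ 2)) := by
      refine h.congr (Filter.Eventually.of_forall fun y => ?_)
      norm_num
    exact h2.integrableOn
  have hmono : (∫ y in Set.Ioi z, Real.exp (-y ^ 2))
      ≤ ∫ y in Set.Ioi z, y * Real.exp (-y ^ 2) := by
    refine setIntegral_mono_on (gauss_int9.integrableOn) hint measurableSet_Ioi ?_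
    intro y hy
    have h1y : 1 ≤ y := le_trans hz (le_of_lt hy)
    nlinarith [Real.exp_pos (-y ^ 2)]
  have heq : (∫ y in Set.Ioi z, y * Real.exp (-y ^ 2)) = Real.exp (-z ^ 2) / 2 := by
    have hderiv : ∀ x ∈ Set.Ici z, HasDerivAt (fun y : ℝ => -Real.exp (-y ^ 2) / 2)
        (x * Real.exp (-x ^ 2)) x := by
      intro x _
      have h : HasDerivAt (fun y : ℝ => -y ^ 2) (-(2 * x)) x := by
        exact (hasDerivAt_pow 2 x).neg.congr_deriv (by norm_num)
      have := (h.exp.neg.div_const 2)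
      simpa using this.congr_deriv (by ring)
    have htend : Filter.Tendsto (fun y : ℝ => -Real.exp (-y ^ 2) / 2) Filter.atTop (nhds 0) := by
      have h1 : Filter.Tendsto (fun y : ℝ => -y ^ 2) Filter.atTop Filter.atBot :=
        Filter.tendsto_neg_atTop_atBot.comp (Filter.tendsto_pow_atTop two_ne_zero)
      have := (Real.tendsto_exp_atBot.comp h1).neg.div_const 2
      simpa using this
    have := integral_Ioi_of_hasDerivAt_of_tendsto' hderiv hint htend
    rw [this]; ring
  rw [heq] at hmono
  have : (0:ℝ) < Real.exp (-z ^ 2) := Real.exp_pos _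
  linarith

lemma exp_sq_cancel9 (y : ℝ) : Real.exp (y ^ 2) * Real.exp (-y ^ 2) = 1 := by
  rw [← Real.exp_add]; norm_num

lemma hasDerivAt_psi9 {y : ℝ} (hy : 0 < y) :
    HasDerivAt (fun y => Gi9 y - Real.exp (y ^ 2) * Phi9 y / (2 * y))
      (Phi9 y * Real.exp (y ^ 2) / (2 * y ^ 2) - 1 / (2 * y)) y := by
  have hsq : HasDerivAt (fun y : ℝ => y ^ 2) (2 * y) y := by
    simpa using (hasDerivAt_pow 2 y).congr_deriv (by ring)
  have hE : HasDerivAt (fun y : ℝ => Real.exp (y ^ 2)) (Real.exp (y ^ 2) * (2 * y)) y := hsq.exp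
  have hn : HasDerivAt (fun y : ℝ => Real.exp (y ^ 2) * Phi9 y)
      (Real.exp (y ^ 2) * (2 * y) * Phi9 y + Real.exp (y ^ 2) * Real.exp (-y ^ 2)) y :=
    hE.mul (hasDerivAt_Phi9 y)
  have hd : HasDerivAt (fun y : ℝ => 2 * y) (2 : ℝ) y := by
    simpa using (hasDerivAt_id y).const_mul 2
  have hw := hn.div hd (by positivity)
  have htot := (hasDerivAt_Gi9 y).sub hw
  refine htot.congr_deriv ?_
  rw [exp_sq_cancel9]
  have hy' : y ≠ 0 := ne_of_gt hy
  field_simp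
  ring

lemma contOn_psi9' {a b : ℝ} (hab : 0 < a) :
    ContinuousOn (fun y : ℝ => Phi9 y * Real.exp (y ^ 2) / (2 * y ^ 2) - 1 / (2 * y))
      (Set.uIcc a b) → True := fun _ => trivial

lemma Gi9_repr {z : ℝ} (hz : 1 ≤ z) :
    Gi9 z = Real.exp (z ^ 2) * Phi9 z / (2 * z) + (Gi9 1 - Real.exp 1 * Phi9 1 / 2)
      + ∫ y in (1:ℝ)..z, (Phi9 y * Real.exp (y ^ 2) / (2 * y ^ 2) - 1 / (2 * y)) := by
  have huIcc : Set.uIcc (1:ℝ) z = Set.Icc 1 z := Set.uIcc_of_le hz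
  have hderiv : ∀ y ∈ Set.uIcc (1:ℝ) z,
      HasDerivAt (fun y => Gi9 y - Real.exp (y ^ 2) * Phi9 y / (2 * y))
        (Phi9 y * Real.exp (y ^ 2) / (2 * y ^ 2) - 1 / (2 * y)) y := by
    intro y hy
    rw [huIcc] at hy
    exact hasDerivAt_psi9 (lt_of_lt_of_le one_pos hy.1 |>.trans_le le_rfl |> fun h => h)
  have hcont : ContinuousOn
      (fun y : ℝ => Phi9 y * Real.exp (y ^ 2) / (2 * y ^ 2) - 1 / (2 * y))
      (Set.uIcc (1:ℝ) z) := by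
    rw [huIcc]
    have hne : ∀ y ∈ Set.Icc (1:ℝ) z, (2 * y ^ 2 : ℝ) ≠ 0 := by
      intro y hy; have : (1:ℝ) ≤ y := hy.1; positivity
    have hne' : ∀ y ∈ Set.Icc (1:ℝ) z, (2 * y : ℝ) ≠ 0 := by
      intro y hy; have : (1:ℝ) ≤ y := hy.1; positivity
    exact (((cont_Phi9.mul (by fun_prop)).continuousOn).div (by fun_prop) hne).sub
      ((continuousOn_const).div (by fun_prop) hne')
  have hint : IntervalIntegrable
      (fun y : ℝ => Phi9 y * Real.exp (y ^ 2) / (2 * y ^ 2) - 1 / (2 * y)) volume 1 z :=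
    hcont.intervalIntegrable
  have := intervalIntegral.integral_eq_sub_of_hasDerivAt hderiv hint
  rw [this]
  ring

lemma hasDerivAt_u9 {y : ℝ} (hy : 0 < y) :
    HasDerivAt (fun y : ℝ => Real.exp (y ^ 2) / (2 * y ^ 3))
      (Real.exp (y ^ 2) * (1 / y ^ 2 - 3 / (2 * y ^ 4))) y := by
  have hsq : HasDerivAt (fun y : ℝ => y ^ 2) (2 * y) y := by
    simpa using (hasDerivAt_pow 2 y).congr_deriv (by ring)
  have hE : HasDerivAt (fun y : ℝ => Real.exp (y ^ 2)) (Real.exp (y ^ 2) * (2 * y)) y := hsq.exp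
  have hd : HasDerivAt (fun y : ℝ => 2 * y ^ 3) (2 * (3 * y ^ 2)) y := by
    simpa using ((hasDerivAt_pow 3 y).const_mul 2).congr_deriv (by ring)
  have := hE.div hd (by positivity)
  refine this.congr_deriv ?_
  have hy' : y ≠ 0 := ne_of_gt hy
  field_simp

lemma intcmp9 {z : ℝ} (hz : 2 ≤ z) :
    (∫ y in (1:ℝ)..z, Real.exp (y ^ 2) / y ^ 2)
      ≤ Real.exp (z ^ 2) / z ^ 3 + Real.exp 4 := by
  have h12 : (1:ℝ) ≤ 2 := one_le_two
  have h2z : (2:ℝ) ≤ z := hz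
  have hcont : ∀ a b : ℝ, 0 < a → a ≤ b → ContinuousOn
      (fun y : ℝ => Real.exp (y ^ 2) / y ^ 2) (Set.uIcc a b) := by
    intro a b ha hab
    rw [Set.uIcc_of_le hab]
    refine (by fun_prop : Continuous fun y : ℝ => Real.exp (y ^ 2)).continuousOn.div
      (by fun_prop) ?_
    intro y hy; have := lt_of_lt_of_le ha hy.1; positivity
  have hsplit : (∫ y in (1:ℝ)..z, Real.exp (y ^ 2) / y ^ 2)
      = (∫ y in (1:ℝ)..2, Real.exp (y ^ 2) / y ^ 2)
        + ∫ y in (2:ℝ)..z, Real.exp (y ^ 2) / y ^ 2 := by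
    rw [intervalIntegral.integral_add_adjacent_intervals
      ((hcont 1 2 one_pos h12).intervalIntegrable)
      ((hcont 2 z two_pos h2z).intervalIntegrable)]
  have hpart1 : (∫ y in (1:ℝ)..2, Real.exp (y ^ 2) / y ^ 2) ≤ Real.exp 4 := by
    have : (∫ y in (1:ℝ)..2, Real.exp (y ^ 2) / y ^ 2)
        ≤ ∫ _y in (1:ℝ)..2, Real.exp 4 := by
      refine intervalIntegral.integral_mono_on h12
        ((hcont 1 2 one_pos h12).intervalIntegrable) (by simp) ?_
      intro y hy
      have h1 : (1:ℝ) ≤ y := hy.1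
      have h2 : y ≤ 2 := hy.2
      have he : Real.exp (y ^ 2) ≤ Real.exp 4 := Real.exp_le_exp.mpr (by nlinarith)
      have hy2 : (1:ℝ) ≤ y ^ 2 := by nlinarith
      calc Real.exp (y ^ 2) / y ^ 2 ≤ Real.exp (y ^ 2) / 1 := by
            apply div_le_div_of_nonneg_left (Real.exp_pos _).le one_pos hy2
        _ ≤ Real.exp 4 := by simpa using he
    rw [intervalIntegral.integral_const] at this
    norm_num at this
    exact this
  have hpart2 : (∫ y in (2:ℝ)..z, Real.exp (y ^ 2) / y ^ 2) ≤ Real.exp (z ^ 2) / z ^ 3 := by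
    have hub : (∫ y in (2:ℝ)..z, Real.exp (y ^ 2) / y ^ 2)
        ≤ ∫ y in (2:ℝ)..z, 2 * (Real.exp (y ^ 2) * (1 / y ^ 2 - 3 / (2 * y ^ 4))) := by
      have hcont2 : ContinuousOn
          (fun y : ℝ => 2 * (Real.exp (y ^ 2) * (1 / y ^ 2 - 3 / (2 * y ^ 4))))
          (Set.uIcc 2 z) := by
        rw [Set.uIcc_of_le h2z]
        have hne : ∀ y ∈ Set.Icc (2:ℝ) z, (y ^ 2 : ℝ) ≠ 0 := by
          intro y hy; have : (2:ℝ) ≤ y := hy.1; positivity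
        have hne' : ∀ y ∈ Set.Icc (2:ℝ) z, (2 * y ^ 4 : ℝ) ≠ 0 := by
          intro y hy; have : (2:ℝ) ≤ y := hy.1; positivity
        exact (continuousOn_const.mul ((by fun_prop : Continuous fun y : ℝ =>
          Real.exp (y ^ 2)).continuousOn.mul
          (((continuousOn_const).div (by fun_prop) hne).sub
            ((continuousOn_const).div (by fun_prop) hne'))))
      refine intervalIntegral.integral_mono_on h2z
        ((hcont 2 z two_pos h2z).intervalIntegrable) hcont2.intervalIntegrable ?_
      intro y hy
      have h2y : (2:ℝ) ≤ y := hy.1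
      have hy0 : (0:ℝ) < y := by linarith
      have hE := (Real.exp_pos (y ^ 2)).le
      have key : (1 : ℝ) / y ^ 2 ≤ 2 * (1 / y ^ 2 - 3 / (2 * y ^ 4)) := by
        have h1 : 2 * (1 / y ^ 2 - 3 / (2 * y ^ 4)) - 1 / y ^ 2 = (y ^ 2 - 3) / y ^ 4 := by
          field_simp; ring
        have h2 : (0:ℝ) ≤ (y ^ 2 - 3) / y ^ 4 := by
          apply div_nonneg (by nlinarith) (by positivity)
        linarith
      calc Real.exp (y ^ 2) / y ^ 2 = Real.exp (y ^ 2) * (1 / y ^ 2) := by ring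
        _ ≤ Real.exp (y ^ 2) * (2 * (1 / y ^ 2 - 3 / (2 * y ^ 4))) :=
            mul_le_mul_of_nonneg_left key hE
        _ = 2 * (Real.exp (y ^ 2) * (1 / y ^ 2 - 3 / (2 * y ^ 4))) := by ring
    have heval : (∫ y in (2:ℝ)..z, Real.exp (y ^ 2) * (1 / y ^ 2 - 3 / (2 * y ^ 4)))
        = Real.exp (z ^ 2) / (2 * z ^ 3) - Real.exp (2 ^ 2) / (2 * 2 ^ 3) := by
      refine intervalIntegral.integral_eq_sub_of_hasDerivAt
        (f := fun y : ℝ => Real.exp (y ^ 2) / (2 * y ^ 3)) ?_ ?_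
      · intro y hy
        rw [Set.uIcc_of_le h2z] at hy
        exact hasDerivAt_u9 (by linarith [hy.1])
      · have hne : ∀ y ∈ Set.Icc (2:ℝ) z, (y ^ 2 : ℝ) ≠ 0 := by
          intro y hy; have : (2:ℝ) ≤ y := hy.1; positivity
        have hne' : ∀ y ∈ Set.Icc (2:ℝ) z, (2 * y ^ 4 : ℝ) ≠ 0 := by
          intro y hy; have : (2:ℝ) ≤ y := hy.1; positivity
        refine ContinuousOn.intervalIntegrable ?_
        rw [Set.uIcc_of_le h2z]
        exact ((by fun_prop : Continuous fun y : ℝ => Real.exp (y ^ 2)).continuousOn.mul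
          (((continuousOn_const).div (by fun_prop) hne).sub
            ((continuousOn_const).div (by fun_prop) hne')))
    rw [intervalIntegral.integral_const_mul, heval] at hub
    have : (0:ℝ) < Real.exp (2 ^ 2) := Real.exp_pos _
    calc (∫ y in (2:ℝ)..z, Real.exp (y ^ 2) / y ^ 2)
        ≤ 2 * (Real.exp (z ^ 2) / (2 * z ^ 3) - Real.exp (2 ^ 2) / (2 * 2 ^ 3)) := hub
      _ ≤ Real.exp (z ^ 2) / z ^ 3 := by
          have hz0 : (0:ℝ) < z ^ 3 := by positivity
          rw [mul_sub]
          have heq2 : 2 * (Real.exp (z ^ 2) / (2 * z ^ 3)) = Real.exp (z ^ 2) / z ^ 3 := by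
            field_simp
          rw [heq2]
          have h8 : (0:ℝ) ≤ Real.exp (2 ^ 2) / (2 * 2 ^ 3) := by positivity
          linarith
  rw [hsplit]
  linarith

lemma Phi9_le_self {z : ℝ} (hz : 0 ≤ z) : Phi9 z ≤ z := by
  have : Phi9 z ≤ ∫ _y in (0:ℝ)..z, (1:ℝ) := by
    refine intervalIntegral.integral_mono_on hz (cont_g9.intervalIntegrable _ _) (by simp) ?_
    intro y _
    simpa using Real.exp_le_one_iff.mpr (by nlinarith [sq_nonneg y] : -y ^ 2 ≤ 0)
  simpa using this

lemma exp_one_le_three9 : Real.exp 1 ≤ 3 := by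
  have := Real.exp_one_lt_d9
  linarith

lemma exp_four_le9 : Real.exp 4 ≤ 55 := by
  have h : Real.exp 4 = Real.exp 1 ^ 4 := by
    rw [← Real.exp_nat_mul]; norm_num
  have := Real.exp_one_lt_d9
  have h0 := Real.exp_pos 1
  rw [h]
  calc Real.exp 1 ^ 4 ≤ 2.7182818286 ^ 4 := by
        apply pow_le_pow_left₀ (Real.exp_pos 1).le this.le
    _ ≤ 55 := by norm_num

lemma Gi9_one_le : Gi9 1 ≤ 3 := by
  have : Gi9 1 ≤ ∫ _y in (0:ℝ)..1, (3:ℝ) := by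
    refine intervalIntegral.integral_mono_on zero_le_one
      (cont_gi9.intervalIntegrable _ _) (by simp) ?_
    intro y hy
    have h1 : Phi9 y ≤ 1 := le_trans (Phi9_le_self hy.1) hy.2
    have h2 : Real.exp (y ^ 2) ≤ Real.exp 1 := Real.exp_le_exp.mpr (by nlinarith [hy.1, hy.2])
    have h3 : 0 ≤ Phi9 y := Phi9_nonneg hy.1
    nlinarith [exp_one_le_three9, Real.exp_pos (y ^ 2)]
  simpa using this

lemma psi1_bound9 : |Gi9 1 - Real.exp 1 * Phi9 1 / 2| ≤ 5 := by
  have h1 : 0 ≤ Gi9 1 := (Gi9_pos one_pos).le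
  have h2 : Gi9 1 ≤ 3 := Gi9_one_le
  have h3 : 0 ≤ Phi9 1 := Phi9_nonneg zero_le_one
  have h4 : Phi9 1 ≤ 1 := by simpa using Phi9_le_self zero_le_one
  have h5 := exp_one_le_three9
  have h6 := (Real.exp_pos 1).le
  rw [abs_le]
  constructor <;> nlinarith

lemma sqrt_pi_le_two9 : Real.sqrt Real.pi ≤ 2 := by
  rw [show (2:ℝ) = Real.sqrt 4 by rw [show (4:ℝ) = 2 ^ 2 by norm_num, Real.sqrt_sq two_pos.le]]
  exact Real.sqrt_le_sqrt (by linarith [Real.pi_le_four])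

lemma exp_neg_sq_le9 {z : ℝ} (hz : 0 < z) : Real.exp (-z ^ 2) ≤ 4 / z ^ 4 := by
  have h1 : z ^ 2 / 2 + 1 ≤ Real.exp (z ^ 2 / 2) := Real.add_one_le_exp _
  have h2 : z ^ 4 / 4 ≤ Real.exp (z ^ 2) := by
    have h3 : Real.exp (z ^ 2) = Real.exp (z ^ 2 / 2) * Real.exp (z ^ 2 / 2) := by
      rw [← Real.exp_add]; ring_nf
    rw [h3]
    nlinarith [sq_nonneg z]
  rw [Real.exp_neg, inv_eq_one_div, div_le_div_iff₀ (Real.exp_pos _) (by positivity)]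
  nlinarith

lemma contOn_psid9 {z : ℝ} (hz : 1 ≤ z) :
    ContinuousOn (fun y : ℝ => Phi9 y * Real.exp (y ^ 2) / (2 * y ^ 2) - 1 / (2 * y))
      (Set.uIcc 1 z) := by
  rw [Set.uIcc_of_le hz]
  have hne : ∀ y ∈ Set.Icc (1:ℝ) z, (2 * y ^ 2 : ℝ) ≠ 0 := by
    intro y hy; have : (1:ℝ) ≤ y := hy.1; positivity
  have hne' : ∀ y ∈ Set.Icc (1:ℝ) z, (2 * y : ℝ) ≠ 0 := by
    intro y hy; have : (1:ℝ) ≤ y := hy.1; positivity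
  exact (((cont_Phi9.mul (by fun_prop)).continuousOn).div (by fun_prop) hne).sub
    ((continuousOn_const).div (by fun_prop) hne')

lemma contOn_maj9 {z : ℝ} (hz : 1 ≤ z) :
    ContinuousOn (fun y : ℝ => Real.exp (y ^ 2) / (2 * y ^ 2) + 1 / 2) (Set.uIcc 1 z) := by
  rw [Set.uIcc_of_le hz]
  have hne : ∀ y ∈ Set.Icc (1:ℝ) z, (2 * y ^ 2 : ℝ) ≠ 0 := by
    intro y hy; have : (1:ℝ) ≤ y := hy.1; positivity
  exact (((by fun_prop : Continuous fun y : ℝ => Real.exp (y ^ 2)).continuousOn).div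
    (by fun_prop) hne).add continuousOn_const

lemma asym9 {z : ℝ} (hz : 2 ≤ z) :
    |Real.exp (-z ^ 2) * Gi9 z - Real.sqrt Real.pi / (4 * z)| ≤ 100 / z ^ 3 := by
  have hz1 : (1:ℝ) ≤ z := by linarith
  have hz0 : (0:ℝ) < z := by linarith
  set I := ∫ y in (1:ℝ)..z, (Phi9 y * Real.exp (y ^ 2) / (2 * y ^ 2) - 1 / (2 * y)) with hIdef
  set P : ℝ := Gi9 1 - Real.exp 1 * Phi9 1 / 2 with hPdef
  have repr := Gi9_repr hz1
  have hc : Real.exp (z ^ 2) * Real.exp (-z ^ 2) = 1 := exp_sq_cancel9 z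
  have hid : Real.exp (-z ^ 2) * Gi9 z - Real.sqrt Real.pi / (4 * z)
      = -((Real.sqrt Real.pi / 2 - Phi9 z) / (2 * z)) + Real.exp (-z ^ 2) * (P + I) := by
    rw [repr]; linear_combination (Phi9 z / (2 * z)) * hc
  -- bound on I
  have hIb : |I| ≤ (Real.exp (z ^ 2) / z ^ 3 + Real.exp 4) / 2 + z / 2 := by
    have habs : |I| ≤ ∫ y in (1:ℝ)..z,
        |Phi9 y * Real.exp (y ^ 2) / (2 * y ^ 2) - 1 / (2 * y)| :=
      intervalIntegral.abs_integral_le_integral_abs hz1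
    have hmono : (∫ y in (1:ℝ)..z, |Phi9 y * Real.exp (y ^ 2) / (2 * y ^ 2) - 1 / (2 * y)|)
        ≤ ∫ y in (1:ℝ)..z, (Real.exp (y ^ 2) / (2 * y ^ 2) + 1 / 2) := by
      refine intervalIntegral.integral_mono_on hz1
        ((contOn_psid9 hz1).abs.intervalIntegrable) ((contOn_maj9 hz1).intervalIntegrable) ?_
      intro y hy
      have h1y : (1:ℝ) ≤ y := hy.1
      have hy0 : (0:ℝ) < y := by linarith
      have hPy : 0 ≤ Phi9 y := Phi9_nonneg (by linarith)
      have hPy1 : Phi9 y ≤ 1 := by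
        have := Phi9_le (by linarith : (0:ℝ) ≤ y)
        have h2 := sqrt_pi_le_two9
        linarith
      have hE := (Real.exp_pos (y ^ 2)).le
      have ht1 : Phi9 y * Real.exp (y ^ 2) / (2 * y ^ 2) ≤ Real.exp (y ^ 2) / (2 * y ^ 2) := by
        apply div_le_div_of_nonneg_right ?_ (by positivity)
        · nlinarith
      have ht2 : (1:ℝ) / (2 * y) ≤ 1 / 2 := by
        rw [div_le_div_iff₀ (by positivity) (by positivity)]; nlinarith
      have habs2 : |Phi9 y * Real.exp (y ^ 2) / (2 * y ^ 2) - 1 / (2 * y)|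
          ≤ Phi9 y * Real.exp (y ^ 2) / (2 * y ^ 2) + 1 / (2 * y) := by
        have := abs_sub (Phi9 y * Real.exp (y ^ 2) / (2 * y ^ 2)) (1 / (2 * y))
        rw [abs_le]
        constructor
        · have h1 : (0:ℝ) ≤ Phi9 y * Real.exp (y ^ 2) / (2 * y ^ 2) := by positivity
          have h2 : (0:ℝ) ≤ 1 / (2 * y) := by positivity
          linarith
        · have h2 : (0:ℝ) ≤ 1 / (2 * y) := by positivity
          linarith
      calc |Phi9 y * Real.exp (y ^ 2) / (2 * y ^ 2) - 1 / (2 * y)|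
          ≤ Phi9 y * Real.exp (y ^ 2) / (2 * y ^ 2) + 1 / (2 * y) := habs2
        _ ≤ Real.exp (y ^ 2) / (2 * y ^ 2) + 1 / 2 := add_le_add ht1 ht2
    have heval : (∫ y in (1:ℝ)..z, (Real.exp (y ^ 2) / (2 * y ^ 2) + 1 / 2))
        = (∫ y in (1:ℝ)..z, Real.exp (y ^ 2) / y ^ 2) / 2 + (z - 1) / 2 := by
      have hi1 : IntervalIntegrable (fun y : ℝ => Real.exp (y ^ 2) / (2 * y ^ 2)) volume 1 z := by
        refine ContinuousOn.intervalIntegrable ?_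
        rw [Set.uIcc_of_le hz1]
        have hne : ∀ y ∈ Set.Icc (1:ℝ) z, (2 * y ^ 2 : ℝ) ≠ 0 := by
          intro y hy; have : (1:ℝ) ≤ y := hy.1; positivity
        exact ((by fun_prop : Continuous fun y : ℝ =>
          Real.exp (y ^ 2)).continuousOn).div (by fun_prop) hne
      rw [intervalIntegral.integral_add hi1 (by simp : IntervalIntegrable
        (fun _ : ℝ => (1:ℝ)/2) volume 1 z)]
      have h1 : (∫ y in (1:ℝ)..z, Real.exp (y ^ 2) / (2 * y ^ 2))
          = (∫ y in (1:ℝ)..z, Real.exp (y ^ 2) / y ^ 2) / 2 := by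
        rw [← intervalIntegral.integral_div]
        apply intervalIntegral.integral_congr
        intro y _
        field_simp
      rw [h1, intervalIntegral.integral_const]
      simp
      ring
    have hcmp := intcmp9 hz
    have : (∫ y in (1:ℝ)..z, Real.exp (y ^ 2) / y ^ 2) / 2
        ≤ (Real.exp (z ^ 2) / z ^ 3 + Real.exp 4) / 2 := by linarith
    rw [heval] at hmono
    calc |I| ≤ (∫ y in (1:ℝ)..z, Real.exp (y ^ 2) / y ^ 2) / 2 + (z - 1) / 2 :=
          le_trans habs hmono
      _ ≤ (Real.exp (z ^ 2) / z ^ 3 + Real.exp 4) / 2 + z / 2 := by linarith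
  -- assemble
  have hPb := psi1_bound9
  rw [← hPdef] at hPb
  have hE := Real.exp_pos (-z ^ 2)
  have htail : Real.sqrt Real.pi / 2 - Phi9 z ≤ Real.exp (-z ^ 2) := Phi9_tail_le hz1
  have htail0 : 0 ≤ Real.sqrt Real.pi / 2 - Phi9 z := by linarith [Phi9_le hz0.le]
  have hT1 : (Real.sqrt Real.pi / 2 - Phi9 z) / (2 * z) ≤ Real.exp (-z ^ 2) :=
    (div_le_self htail0 (by linarith : (1:ℝ) ≤ 2 * z)).trans htail
  have hstep : |Real.exp (-z ^ 2) * Gi9 z - Real.sqrt Real.pi / (4 * z)|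
      ≤ Real.exp (-z ^ 2)
        + Real.exp (-z ^ 2) * (5 + ((Real.exp (z ^ 2) / z ^ 3 + Real.exp 4) / 2 + z / 2)) := by
    rw [hid]
    refine (abs_add_le _ _).trans ?_
    rw [abs_neg, abs_of_nonneg (by positivity), abs_mul, abs_of_nonneg hE.le]
    refine add_le_add hT1 ?_
    apply mul_le_mul_of_nonneg_left ?_ hE.le
    calc |P + I| ≤ |P| + |I| := abs_add_le _ _
      _ ≤ 5 + ((Real.exp (z ^ 2) / z ^ 3 + Real.exp 4) / 2 + z / 2) := add_le_add hPb hIb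
  -- final numeric estimates
  have hEz : Real.exp (-z ^ 2) * (Real.exp (z ^ 2) / z ^ 3) = 1 / z ^ 3 := by
    field_simp
    linear_combination hc
  have hEb : Real.exp (-z ^ 2) ≤ 4 / z ^ 4 := exp_neg_sq_le9 hz0
  have hz3 : (0:ℝ) < z ^ 3 := by positivity
  have hz4 : (0:ℝ) < z ^ 4 := by positivity
  have hd1 : (4:ℝ) / z ^ 4 ≤ 2 / z ^ 3 := by
    rw [div_le_div_iff₀ hz4 hz3]; nlinarith
  have he4 := exp_four_le9
  have hrw : Real.exp (-z ^ 2)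
        + Real.exp (-z ^ 2) * (5 + ((Real.exp (z ^ 2) / z ^ 3 + Real.exp 4) / 2 + z / 2))
      = Real.exp (-z ^ 2) * (6 + Real.exp 4 / 2 + z / 2)
        + (Real.exp (-z ^ 2) * (Real.exp (z ^ 2) / z ^ 3)) / 2 := by ring
  rw [hrw, hEz] at hstep
  have h1 : (6:ℝ) + Real.exp 4 / 2 + z / 2 ≤ 18 * z := by nlinarith
  have h2 : Real.exp (-z ^ 2) * (6 + Real.exp 4 / 2 + z / 2) ≤ (4 / z ^ 4) * (18 * z) :=
    mul_le_mul hEb h1 (by positivity) (by positivity)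
  have h3 : (4 / z ^ 4) * (18 * z) = 72 * (1 / z ^ 3) := by
    field_simp
    ring
  have h4 : (0:ℝ) < 1 / z ^ 3 := by positivity
  have h6 := h2.trans (le_of_eq h3)
  have e1 : (1:ℝ) / z ^ 3 / 2 = (1/2) * (1 / z ^ 3) := by ring
  have e2 : (100:ℝ) / z ^ 3 = 100 * (1 / z ^ 3) := by ring
  calc |Real.exp (-z ^ 2) * Gi9 z - Real.sqrt Real.pi / (4 * z)|
      ≤ Real.exp (-z ^ 2) * (6 + Real.exp 4 / 2 + z / 2) + 1 / z ^ 3 / 2 := hstep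
    _ ≤ 100 / z ^ 3 := by rw [e2]; linarith

/-- Properties of the first-order correction `f₁`: the solution of
`f₁'' = (z² - 1) f₁ - e^{-z²/2}`, `f₁(0) = f₁'(0) = 0`, is negative for `z > 0` and
`f₁(z) = e^{z²/2} ( -√π/(4z) + O(z⁻³) )` as `z → +∞`. -/
theorem stmt_9 (f₁ : ℝ → ℝ)
    (hsm : ContDiff ℝ (⊤ : ℕ∞) f₁)
    (hode : ∀ z : ℝ, deriv (deriv f₁) z = (z ^ 2 - 1) * f₁ z - Real.exp (-z ^ 2 / 2))
    (h0 : f₁ 0 = 0) (h0' : deriv f₁ 0 = 0) :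
    (∀ z : ℝ, 0 < z → f₁ z < 0) ∧
    ∃ C z₀ : ℝ, 0 < C ∧ ∀ z ≥ z₀,
      |f₁ z - Real.exp (z ^ 2 / 2) * (-(Real.sqrt Real.pi) / (4 * z))|
        ≤ C * Real.exp (z ^ 2 / 2) / z ^ 3 := by
  have hrepr := keyB9 f₁ hsm hode h0 h0'
  constructor
  · intro z hz
    rw [hrepr z]
    have h1 := Gi9_pos hz
    have h2 := Real.exp_pos (-z ^ 2 / 2)
    nlinarith
  · refine ⟨100, 2, by norm_num, ?_⟩
    intro z hz
    have hz0 : (0:ℝ) < z := by linarith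
    have hkey := asym9 hz
    have hc : Real.exp (z ^ 2 / 2) * Real.exp (-z ^ 2) = Real.exp (-z ^ 2 / 2) := by
      rw [← Real.exp_add]; ring_nf
    have hid : f₁ z - Real.exp (z ^ 2 / 2) * (-(Real.sqrt Real.pi) / (4 * z))
        = -(Real.exp (z ^ 2 / 2)
            * (Real.exp (-z ^ 2) * Gi9 z - Real.sqrt Real.pi / (4 * z))) := by
      rw [hrepr z]
      linear_combination Gi9 z * hc
    rw [hid, abs_neg, abs_mul, abs_of_nonneg (Real.exp_pos _).le]
    calc Real.exp (z ^ 2 / 2) * |Real.exp (-z ^ 2) * Gi9 z - Real.sqrt Real.pi / (4 * z)|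
        ≤ Real.exp (z ^ 2 / 2) * (100 / z ^ 3) :=
          mul_le_mul_of_nonneg_left hkey (Real.exp_pos _).le
      _ = 100 * Real.exp (z ^ 2 / 2) / z ^ 3 := by ring
end

section
/- Let h_n > 0 with h_n → 0 and define g_n(w) = (1/(2π)) ∫_{-π}^{π} e^{-y²/(2h_n²) - iwy} dy / √h_n for w ∈ ℝ. Then g_n(w) = (h_n^{1/2}/√(2π)) e^{-h_n² w² / 2} + O(e^{-π²/(4h_n²)}) uniformly in w ∈ ℝ, and ‖g_n‖_{L^∞} = O(h_n^{1/2}), ‖∂_w^k g_n‖_{L^∞} = O(h_n^{k + 1/2}) for every k ∈ ℕ. -/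
/-!
Extending the integral over `[-π, π]` to all of `ℝ` gives the Fourier transform of a Gaussian,
`√(2π) b e^{-b²w²/2}`, and the part outside `[-π, π]` is controlled through
`e^{-y²/(2b²)} ≤ e^{-π²/(4b²)} e^{-y²/(4b²)}` for `|y| ≥ π`. Differentiating `k` times under the
integral brings down `(-iy)^k`, and the substitution `y = bz` bounds `∫ |y|^k e^{-y²/(2b²)}` by
`b^{k+1}` times an absolute moment of the standard Gaussian.
-/

open MeasureTheory Filter

open scoped Real Complex

open Complex (I)

noncomputable section

def gaussianWave (b w y : ℝ) : ℂ := cexp (-(y : ℂ) ^ 2 / (2 * (b : ℂ) ^ 2) - I * w * y)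

def gaussianWaveDeriv (b : ℝ) (k : ℕ) (w y : ℝ) : ℂ := (-I * y) ^ k * gaussianWave b w y

def gaussianCoeff (b w : ℝ) : ℂ :=
  ((1 / (2 * π) : ℝ) : ℂ) * (∫ y in (-π)..π, gaussianWave b w y) / ((√b : ℝ) : ℂ)

def gaussianAbsMoment (k : ℕ) : ℝ := ∫ z : ℝ, |z| ^ k * rexp (-z ^ 2 / 2)

end

lemma norm_gaussianWave (b w y : ℝ) : ‖gaussianWave b w y‖ = rexp (-y ^ 2 / (2 * b ^ 2)) := by
  have h : -(y : ℂ) ^ 2 / (2 * (b : ℂ) ^ 2) - I * w * y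
      = ((-y ^ 2 / (2 * b ^ 2) : ℝ) : ℂ) + ((-(w * y) : ℝ) : ℂ) * I := by
    push_cast; ring
  rw [gaussianWave, Complex.norm_exp, h, Complex.add_re, Complex.ofReal_re, Complex.re_ofReal_mul,
    Complex.I_re, mul_zero, add_zero]

lemma norm_gaussianWaveDeriv (b : ℝ) (k : ℕ) (w y : ℝ) :
    ‖gaussianWaveDeriv b k w y‖ = |y| ^ k * rexp (-y ^ 2 / (2 * b ^ 2)) := by
  simp [gaussianWaveDeriv, norm_gaussianWave]

lemma continuous_gaussianWaveDeriv (b : ℝ) (k : ℕ) (w : ℝ) :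
    Continuous (gaussianWaveDeriv b k w) := by
  unfold gaussianWaveDeriv gaussianWave
  fun_prop

lemma hasDerivAt_gaussianWaveDeriv (b : ℝ) (k : ℕ) (w y : ℝ) :
    HasDerivAt (fun w ↦ gaussianWaveDeriv b k w y) (gaussianWaveDeriv b (k + 1) w y) w := by
  have hlin : HasDerivAt (fun w : ℂ ↦ -(y : ℂ) ^ 2 / (2 * (b : ℂ) ^ 2) - I * w * y)
      (-I * y) w := by
    simpa using (((hasDerivAt_id (w : ℂ)).const_mul I).mul_const (y : ℂ)).const_sub
      (-(y : ℂ) ^ 2 / (2 * (b : ℂ) ^ 2))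
  convert (hlin.cexp.const_mul ((-I * y) ^ k)).comp_ofReal using 1 <;>
    simp only [gaussianWaveDeriv, gaussianWave, pow_succ]
  ring

lemma hasDerivAt_intervalIntegral_gaussianWaveDeriv (a c b : ℝ) (k : ℕ) (w : ℝ) :
    HasDerivAt (fun w ↦ ∫ y in a..c, gaussianWaveDeriv b k w y)
      (∫ y in a..c, gaussianWaveDeriv b (k + 1) w y) w :=
  (intervalIntegral.hasDerivAt_integral_of_dominated_loc_of_deriv_le
    (bound := fun y ↦ |y| ^ (k + 1) * rexp (-y ^ 2 / (2 * b ^ 2))) univ_mem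
    (Eventually.of_forall fun w ↦ (continuous_gaussianWaveDeriv b k w).aestronglyMeasurable)
    ((continuous_gaussianWaveDeriv b k w).intervalIntegrable a c)
    (continuous_gaussianWaveDeriv b (k + 1) w).aestronglyMeasurable
    (Eventually.of_forall fun y _ w _ ↦ (norm_gaussianWaveDeriv b (k + 1) w y).le)
    ((by fun_prop : Continuous fun y : ℝ ↦ |y| ^ (k + 1) * rexp (-y ^ 2 / (2 * b ^ 2))
      ).intervalIntegrable a c)
    (Eventually.of_forall fun y _ w _ ↦ hasDerivAt_gaussianWaveDeriv b k w y)).2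

lemma iteratedDeriv_intervalIntegral_gaussianWave (a c b : ℝ) (k : ℕ) :
    iteratedDeriv k (fun w ↦ ∫ y in a..c, gaussianWave b w y) =
      fun w ↦ ∫ y in a..c, gaussianWaveDeriv b k w y := by
  induction k with
  | zero => simp [gaussianWaveDeriv]
  | succ k ih =>
    rw [iteratedDeriv_succ, ih]
    exact funext fun w ↦ (hasDerivAt_intervalIntegral_gaussianWaveDeriv a c b k w).deriv

lemma iteratedDeriv_gaussianCoeff (b : ℝ) (k : ℕ) (w : ℝ) :
    iteratedDeriv k (gaussianCoeff b) w =
      ((1 / (2 * π) : ℝ) : ℂ) / ((√b : ℝ) : ℂ) * ∫ y in (-π)..π, gaussianWaveDeriv b k w y := by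
  have h : gaussianCoeff b =
      fun w ↦ ((1 / (2 * π) : ℝ) : ℂ) / ((√b : ℝ) : ℂ) * ∫ y in (-π)..π, gaussianWave b w y := by
    ext w; rw [gaussianCoeff]; ring
  rw [h, iteratedDeriv_const_mul_field, iteratedDeriv_intervalIntegral_gaussianWave]

lemma integrable_abs_pow_mul_exp_neg_sq_div (k : ℕ) {c : ℝ} (hc : 0 < c) :
    Integrable fun y : ℝ ↦ |y| ^ k * rexp (-y ^ 2 / c) := by
  have h := (integrable_rpow_mul_exp_neg_mul_sq (inv_pos.2 hc) (s := k)
    (by linarith [(Nat.cast_nonneg k : (0 : ℝ) ≤ k)])).norm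
  refine h.congr (Eventually.of_forall fun y ↦ ?_)
  simp [Real.rpow_natCast, div_eq_inv_mul]

lemma integral_abs_pow_mul_exp_neg_sq_div {b : ℝ} (hb : 0 < b) (k : ℕ) :
    ∫ y : ℝ, |y| ^ k * rexp (-y ^ 2 / (2 * b ^ 2)) = b ^ (k + 1) * gaussianAbsMoment k := by
  have hscale : ∀ y : ℝ, |y| ^ k * rexp (-y ^ 2 / (2 * b ^ 2))
      = b ^ k * (|b⁻¹ * y| ^ k * rexp (-(b⁻¹ * y) ^ 2 / 2)) := fun y ↦ by
    rw [abs_mul, abs_of_pos (inv_pos.2 hb), ← mul_assoc, ← mul_pow, ← mul_assoc,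
      mul_inv_cancel₀ hb.ne', one_mul]
    field_simp
  simp_rw [hscale]
  rw [integral_const_mul, Measure.integral_comp_mul_left
    (fun z ↦ |z| ^ k * rexp (-z ^ 2 / 2)), inv_inv, abs_of_pos hb, smul_eq_mul,
    gaussianAbsMoment, pow_succ, mul_assoc]

lemma gaussianAbsMoment_pos (k : ℕ) : 0 < gaussianAbsMoment k := by
  refine (integral_pos_iff_support_of_nonneg (fun z ↦ by positivity)
    (integrable_abs_pow_mul_exp_neg_sq_div k two_pos)).2 ?_
  refine lt_of_lt_of_le (by simp : 0 < volume (Set.Ioi (0 : ℝ))) (measure_mono fun z hz ↦ ?_)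
  exact (mul_pos (pow_pos (abs_pos.2 hz.ne') k) (Real.exp_pos _)).ne'

lemma norm_intervalIntegral_gaussianWaveDeriv_le {a c b : ℝ} (hac : a ≤ c) (hb : 0 < b)
    (k : ℕ) (w : ℝ) :
    ‖∫ y in a..c, gaussianWaveDeriv b k w y‖ ≤ b ^ (k + 1) * gaussianAbsMoment k :=
  calc ‖∫ y in a..c, gaussianWaveDeriv b k w y‖
      ≤ ∫ y in a..c, ‖gaussianWaveDeriv b k w y‖ :=
        intervalIntegral.norm_integral_le_integral_norm hac
    _ = ∫ y in Set.Ioc a c, |y| ^ k * rexp (-y ^ 2 / (2 * b ^ 2)) := by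
        simp_rw [norm_gaussianWaveDeriv, intervalIntegral.integral_of_le hac]
    _ ≤ ∫ y : ℝ, |y| ^ k * rexp (-y ^ 2 / (2 * b ^ 2)) :=
        setIntegral_le_integral (integrable_abs_pow_mul_exp_neg_sq_div k (by positivity))
          (Eventually.of_forall fun y ↦ by positivity)
    _ = b ^ (k + 1) * gaussianAbsMoment k := integral_abs_pow_mul_exp_neg_sq_div hb k

lemma gaussianWave_eq_cexp_quadratic (b w y : ℝ) :
    gaussianWave b w y = cexp (-((1 / (2 * b ^ 2) : ℝ) : ℂ) * y ^ 2 + -I * w * y + 0) := by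
  rw [gaussianWave]; push_cast; ring_nf

lemma integrable_gaussianWave {b : ℝ} (hb : 0 < b) (w : ℝ) : Integrable (gaussianWave b w) := by
  simp_rw [funext (gaussianWave_eq_cexp_quadratic b w)]
  exact integrable_cexp_quadratic (by rw [Complex.ofReal_re]; positivity) _ _

lemma integral_gaussianWave {b : ℝ} (hb : 0 < b) (w : ℝ) :
    ∫ y, gaussianWave b w y = ((√(2 * π) * b : ℝ) : ℂ) * cexp (-((b ^ 2 * w ^ 2 / 2 : ℝ) : ℂ)) := by
  have hre : (-((1 / (2 * b ^ 2) : ℝ) : ℂ)).re < 0 := by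
    rw [Complex.neg_re, Complex.ofReal_re, neg_lt_zero]; positivity
  simp_rw [gaussianWave_eq_cexp_quadratic, integral_cexp_quadratic hre, neg_neg]
  have hsqrt :
      ((π : ℂ) / ((1 / (2 * b ^ 2) : ℝ) : ℂ)) ^ (1 / 2 : ℂ) = ((√(2 * π) * b : ℝ) : ℂ) := by
    rw [← Complex.ofReal_div, show (1 / 2 : ℂ) = ((1 / 2 : ℝ) : ℂ) by norm_num,
      ← Complex.ofReal_cpow (by positivity), ← Real.sqrt_eq_rpow,
      show π / (1 / (2 * b ^ 2)) = 2 * π * b ^ 2 by field_simp,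
      Real.sqrt_mul (by positivity), Real.sqrt_sq hb.le]
  rw [hsqrt]
  congr 2
  have : ((b : ℂ)) ≠ 0 := by exact_mod_cast hb.ne'
  push_cast
  field_simp
  rw [Complex.I_sq]
  ring

lemma integral_exp_neg_sq_div (c : ℝ) : ∫ y : ℝ, rexp (-y ^ 2 / c) = √(c * π) := by
  simpa [neg_div, div_eq_inv_mul, div_inv_eq_mul] using integral_gaussian c⁻¹

lemma norm_setIntegral_compl_Ioc_gaussianWave_le {b L : ℝ} (hb : 0 < b) (hL : 0 ≤ L) (w : ℝ) :
    ‖∫ y in (Set.Ioc (-L) L)ᶜ, gaussianWave b w y‖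
      ≤ rexp (-L ^ 2 / (4 * b ^ 2)) * (2 * b * √π) := by
  have hb2 : (0 : ℝ) < 2 * b ^ 2 := by positivity
  have hb4 : (0 : ℝ) < 4 * b ^ 2 := by positivity
  have hdom : Integrable fun y : ℝ ↦ rexp (-L ^ 2 / (4 * b ^ 2)) * rexp (-y ^ 2 / (4 * b ^ 2)) :=
    Integrable.const_mul (by simpa using integrable_abs_pow_mul_exp_neg_sq_div 0 hb4) _
  calc ‖∫ y in (Set.Ioc (-L) L)ᶜ, gaussianWave b w y‖
      ≤ ∫ y in (Set.Ioc (-L) L)ᶜ, rexp (-y ^ 2 / (2 * b ^ 2)) := by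
        simp_rw [← norm_gaussianWave b w]
        exact norm_integral_le_integral_norm _
    _ ≤ ∫ y in (Set.Ioc (-L) L)ᶜ, rexp (-L ^ 2 / (4 * b ^ 2)) * rexp (-y ^ 2 / (4 * b ^ 2)) := by
        refine setIntegral_mono_on
          (by simpa using (integrable_abs_pow_mul_exp_neg_sq_div 0 hb2).integrableOn)
          hdom.integrableOn measurableSet_Ioc.compl fun y hy ↦ ?_
        have hy : L ^ 2 ≤ y ^ 2 := by
          simp only [Set.mem_compl_iff, Set.mem_Ioc, not_and_or, not_lt, not_le] at hy
          rcases hy with hy | hy <;> nlinarith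
        rw [← Real.exp_add, Real.exp_le_exp, ← add_div, div_le_div_iff₀ hb2 hb4]
        nlinarith
    _ ≤ ∫ y, rexp (-L ^ 2 / (4 * b ^ 2)) * rexp (-y ^ 2 / (4 * b ^ 2)) :=
        setIntegral_le_integral hdom (Eventually.of_forall fun y ↦ by positivity)
    _ = rexp (-L ^ 2 / (4 * b ^ 2)) * (2 * b * √π) := by
        rw [integral_const_mul, integral_exp_neg_sq_div,
          show 4 * b ^ 2 * π = (2 * b) ^ 2 * π by ring, Real.sqrt_mul (by positivity),
          Real.sqrt_sq (by positivity)]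

lemma gaussianCoeff_sub_eq {b : ℝ} (hb : 0 < b) (w : ℝ) :
    gaussianCoeff b w - ((√b / √(2 * π) : ℝ) : ℂ) * cexp (-((b ^ 2 * w ^ 2 / 2 : ℝ) : ℂ)) =
      -(((1 / (2 * π) / √b : ℝ) : ℂ) * ∫ y in (Set.Ioc (-π) π)ᶜ, gaussianWave b w y) := by
  have hsplit :=
    integral_add_compl (measurableSet_Ioc (a := -π) (b := π)) (integrable_gaussianWave hb w)
  have hscale : 1 / (2 * π) / √b * (√(2 * π) * b) = √b / √(2 * π) :=
    calc 1 / (2 * π) / √b * (√(2 * π) * b) = b / √b * (√(2 * π) / (2 * π)) := by ring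
      _ = √b / √(2 * π) := by rw [Real.div_sqrt, Real.sqrt_div_self']; ring
  rw [← hscale, Complex.ofReal_mul, mul_assoc, ← integral_gaussianWave hb w, ← hsplit,
    gaussianCoeff, intervalIntegral.integral_of_le (by linarith [Real.pi_pos])]
  push_cast
  ring

lemma norm_gaussianCoeff_sub_le {b : ℝ} (hb : 0 < b) (hbπ : b ≤ π) (w : ℝ) :
    ‖gaussianCoeff b w - ((√b / √(2 * π) : ℝ) : ℂ) * cexp (-((b ^ 2 * w ^ 2 / 2 : ℝ) : ℂ))‖
      ≤ rexp (-π ^ 2 / (4 * b ^ 2)) := by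
  have hscale : 1 / (2 * π) / √b * (2 * b * √π) = √b / √π :=
    calc 1 / (2 * π) / √b * (2 * b * √π) = b / √b * (√π / π) := by ring
      _ = √b / √π := by rw [Real.div_sqrt, Real.sqrt_div_self']; ring
  rw [gaussianCoeff_sub_eq hb w, norm_neg, norm_mul, Complex.norm_real,
    Real.norm_of_nonneg (by positivity)]
  calc 1 / (2 * π) / √b * ‖∫ y in (Set.Ioc (-π) π)ᶜ, gaussianWave b w y‖
      ≤ 1 / (2 * π) / √b * (rexp (-π ^ 2 / (4 * b ^ 2)) * (2 * b * √π)) := by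
        gcongr
        exact norm_setIntegral_compl_Ioc_gaussianWave_le hb Real.pi_pos.le w
    _ = rexp (-π ^ 2 / (4 * b ^ 2)) * (√b / √π) := by rw [← hscale]; ring
    _ ≤ rexp (-π ^ 2 / (4 * b ^ 2)) :=
        mul_le_of_le_one_right (Real.exp_pos _).le
          ((div_le_one (Real.sqrt_pos.2 Real.pi_pos)).2 (Real.sqrt_le_sqrt hbπ))

lemma norm_iteratedDeriv_gaussianCoeff_le {b : ℝ} (hb : 0 < b) (k : ℕ) (w : ℝ) :
    ‖iteratedDeriv k (gaussianCoeff b) w‖ ≤ gaussianAbsMoment k / (2 * π) * b ^ k * √b := by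
  rw [iteratedDeriv_gaussianCoeff, norm_mul, ← Complex.ofReal_div, Complex.norm_real,
    Real.norm_of_nonneg (by positivity)]
  calc 1 / (2 * π) / √b * ‖∫ y in (-π)..π, gaussianWaveDeriv b k w y‖
      ≤ 1 / (2 * π) / √b * (b ^ (k + 1) * gaussianAbsMoment k) := by
        gcongr
        exact norm_intervalIntegral_gaussianWaveDeriv_le (by linarith [Real.pi_pos]) hb k w
    _ = gaussianAbsMoment k / (2 * π) * b ^ k * (b / √b) := by ring
    _ = gaussianAbsMoment k / (2 * π) * b ^ k * √b := by rw [Real.div_sqrt]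

/-- Gaussian coefficient estimates: with `h_n → 0`, `h_n > 0`, and
`g_n(w) = (1/(2π)) ∫_{-π}^π e^{-y²/(2h_n²) - iwy} dy / √h_n`, one has
`g_n(w) = (√h_n/√(2π)) e^{-h_n²w²/2} + O(e^{-π²/(4h_n²)})` uniformly in `w`,
`‖g_n‖_∞ = O(√h_n)` and `‖∂_w^k g_n‖_∞ = O(h_n^{k+1/2})` for every `k`. -/
theorem stmt_16 (h : ℕ → ℝ) (hpos : ∀ n, 0 < h n)
    (hlim : Tendsto h atTop (nhds 0)) :
    let g : ℕ → ℝ → ℂ := fun n w =>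
      ((1 / (2 * Real.pi) : ℝ) : ℂ) *
        (∫ y in (-Real.pi)..Real.pi,
          Complex.exp (-(y : ℂ) ^ 2 / (2 * ((h n : ℝ) : ℂ) ^ 2) - Complex.I * w * y))
        / ((Real.sqrt (h n) : ℝ) : ℂ)
    (∃ C : ℝ, 0 < C ∧ ∃ n₀ : ℕ, ∀ n ≥ n₀, ∀ w : ℝ,
        ‖g n w - ((Real.sqrt (h n) / Real.sqrt (2 * Real.pi) : ℝ) : ℂ) *
            Complex.exp (-(((h n) ^ 2 * w ^ 2 / 2 : ℝ) : ℂ))‖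
          ≤ C * Real.exp (-Real.pi ^ 2 / (4 * (h n) ^ 2)))
    ∧ (∃ C : ℝ, 0 < C ∧ ∃ n₀ : ℕ, ∀ n ≥ n₀, ∀ w : ℝ, ‖g n w‖ ≤ C * Real.sqrt (h n))
    ∧ ∀ k : ℕ, ∃ C : ℝ, 0 < C ∧ ∃ n₀ : ℕ, ∀ n ≥ n₀, ∀ w : ℝ,
        ‖iteratedDeriv k (g n) w‖ ≤ C * (h n) ^ k * Real.sqrt (h n) := by
  intro g
  have hg (n : ℕ) : g n = gaussianCoeff (h n) := rfl
  simp only [hg]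
  have hderiv (k : ℕ) : ∃ C : ℝ, 0 < C ∧ ∃ n₀ : ℕ, ∀ n ≥ n₀, ∀ w : ℝ,
      ‖iteratedDeriv k (gaussianCoeff (h n)) w‖ ≤ C * (h n) ^ k * Real.sqrt (h n) :=
    ⟨gaussianAbsMoment k / (2 * π), by have := gaussianAbsMoment_pos k; positivity, 0,
      fun n _ w ↦ norm_iteratedDeriv_gaussianCoeff_le (hpos n) k w⟩
  refine ⟨?_, by simpa using hderiv 0, hderiv⟩
  obtain ⟨n₀, hn₀⟩ := eventually_atTop.1 (hlim.eventually (gt_mem_nhds Real.pi_pos))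
  exact ⟨1, one_pos, n₀, fun n hn w ↦ by
    simpa using norm_gaussianCoeff_sub_le (hpos n) (hn₀ n hn).le w⟩
end

section
/- (Contraction scheme for the first Dirichlet eigenvalue of the semiclassical harmonic oscillator) Let f₀(z)=e^{-z²/2}, f₁ as above with f₁(√w) ∈ [-c₁^{-1} w^{-1/2} e^{w/2}, -c₁ w^{-1/2} e^{w/2}] for large w, and G₂(ν,w) = ν² R₂(ν,√w) with |∂_ν G₂(ν,w)| ≤ C w^{B} e^{w/2} ν for 0 ≤ ν ≤ 1. Define ν₁ = -f₀(√w)/f₁(√w) and ν_{n+1} = -(f₀(√w) + G₂(ν_n,w))/f₁(√w). Then there exist A > 2c₁^{-1} and w₀ such that for all w ≥ w₀: 0 < ν_n ≤ A w^{1/2} e^{-w} for all n, the sequence (ν_n) converges to a limit ν(w) ∈ (0, A w^{1/2} e^{-w}], and F(ν(w), w) := f₀(√w) + ν(w) f₁(√w) + G₂(ν(w), w) = 0. -/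
/-!
For large `w` the map `ν ↦ -(f₀ + G₂ ν) / f₁` sends `[0, M]`, `M = 3 c₁⁻¹ √w e^{-w}`, into
`(0, M]` and is a `1/2`-contraction there: by the derivative bound, `G₂` is Lipschitz on `[0, M]`
with constant `C w^B e^{w/2} M`, which is negligible against `|f₁(√w)| ≥ c₁ e^{w/2} / √w`.
The `ν_n` are the iterates of this map started at `0`, so the Banach fixed point theorem gives
the limit, and the fixed point equation is `F(ν, w) = 0`.
-/

open Filter Set Real Topology Function
open scoped NNReal

theorem LipschitzOnWith.exists_isFixedPt_tendsto_iterate {α : Type*} [MetricSpace α]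
    {f : α → α} {s : Set α} {K : ℝ≥0} (hK : K < 1) (hs : IsComplete s) (hfs : MapsTo f s s)
    (hf : LipschitzOnWith K f s) {x : α} (hx : x ∈ s) :
    ∃ y ∈ s, IsFixedPt f y ∧ Tendsto (fun n ↦ f^[n] x) atTop (𝓝 y) := by
  obtain ⟨y, hy, hfix, hlim, -⟩ :=
    ContractingWith.exists_fixedPoint' hs hfs ⟨hK, hf.mapsToRestrict hfs⟩ hx (edist_ne_top _ _)
  exact ⟨y, hy, hfix, hlim⟩

theorem lipschitzOnWith_Icc_of_abs_deriv_le_mul {G : ℝ → ℝ} (hG : Differentiable ℝ G)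
    {K M : ℝ} (hK : 0 ≤ K) (hG' : ∀ t ∈ Icc 0 M, |deriv G t| ≤ K * t) :
    LipschitzOnWith (K * M).toNNReal G (Icc 0 M) :=
  (convex_Icc 0 M).lipschitzOnWith_of_nnnorm_deriv_le (fun t _ ↦ hG t) fun t ht ↦ by
    rw [← NNReal.coe_le_coe, coe_nnnorm, Real.norm_eq_abs]
    exact (hG' t ht).trans ((mul_le_mul_of_nonneg_left ht.2 hK).trans (Real.le_coe_toNNReal _))

theorem eq_iterate_of_forall_succ_eq {α : Type*} {T : α → α} {x : α} {u : ℕ → α}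
    (h₁ : u 1 = T x) (hsucc : ∀ n ≥ 1, u (n + 1) = T (u n)) : ∀ n ≥ 1, u n = T^[n] x := by
  intro n hn
  induction n, hn using Nat.le_induction with
  | base => exact h₁
  | succ n hn ih => rw [hsucc n hn, iterate_succ_apply', ih]

noncomputable def shiftMap (f₀ f₁ : ℝ) (G : ℝ → ℝ) (ν : ℝ) : ℝ := -(f₀ + G ν) / f₁

section shiftMap

variable {f₀ f₁ M : ℝ} {k : ℝ≥0} {G : ℝ → ℝ}

theorem shiftMap_lipschitzOnWith {s : Set ℝ} (hG : LipschitzOnWith k G s) (hk : 2 * k ≤ |f₁|) :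
    LipschitzOnWith 2⁻¹ (shiftMap f₀ f₁ G) s := by
  refine LipschitzOnWith.of_dist_le_mul fun x hx y hy ↦ ?_
  have hxy : dist (G x) (G y) ≤ k * dist x y := hG.dist_le_mul x hx y hy
  have hdist : dist (shiftMap f₀ f₁ G x) (shiftMap f₀ f₁ G y) = dist (G x) (G y) / |f₁| := by
    rw [Real.dist_eq, Real.dist_eq, ← abs_div, ← abs_neg]
    congr 1
    simp only [shiftMap]
    ring
  rw [hdist]
  refine div_le_of_le_mul₀ (abs_nonneg _) (by positivity) ?_
  push_cast
  nlinarith [dist_nonneg (x := x) (y := y)]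

theorem shiftMap_mapsTo (hf₀ : 0 < f₀) (hf₁ : f₁ < 0) (hG0 : G 0 = 0)
    (hG : LipschitzOnWith k G (Icc 0 M)) (hkM : k * M ≤ f₀ / 2) (hM : 3 * f₀ ≤ 2 * M * |f₁|) :
    MapsTo (shiftMap f₀ f₁ G) (Icc 0 M) (Ioc 0 M) := by
  intro x hx
  have hM0 : 0 ≤ M := hx.1.trans hx.2
  have hGx : |G x| ≤ f₀ / 2 := by
    have := hG.dist_le_mul x hx 0 ⟨le_rfl, hM0⟩
    rw [Real.dist_eq, Real.dist_eq, hG0, sub_zero, sub_zero, abs_of_nonneg hx.1] at this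
    nlinarith [hx.2, k.2]
  rw [abs_of_neg hf₁] at hM
  rw [abs_le] at hGx
  simp only [shiftMap, neg_div, ← div_neg, mem_Ioc]
  exact ⟨div_pos (by linarith) (by linarith), (div_le_iff₀ (by linarith)).2 (by linarith)⟩

theorem shiftMap_iterate (hf₀ : 0 < f₀) (hf₁ : f₁ < 0) (hG0 : G 0 = 0)
    (hG : LipschitzOnWith k G (Icc 0 M)) (hkM : k * M ≤ f₀ / 2) (hk : 2 * k ≤ |f₁|)
    (hM : 3 * f₀ ≤ 2 * M * |f₁|) :
    (∀ n ≥ 1, (shiftMap f₀ f₁ G)^[n] 0 ∈ Ioc 0 M) ∧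
      ∃ ν ∈ Ioc 0 M, Tendsto (fun n ↦ (shiftMap f₀ f₁ G)^[n] 0) atTop (𝓝 ν) ∧
        f₀ + ν * f₁ + G ν = 0 := by
  have hmaps := shiftMap_mapsTo hf₀ hf₁ hG0 hG hkM hM
  have hM0 : 0 ≤ M := by nlinarith [abs_nonneg f₁]
  have h0 : (0 : ℝ) ∈ Icc 0 M := ⟨le_rfl, hM0⟩
  obtain ⟨ν, hν, hfix, hlim⟩ := (shiftMap_lipschitzOnWith hG hk).exists_isFixedPt_tendsto_iterate
    (by norm_num) isClosed_Icc.isComplete (hmaps.mono_right Ioc_subset_Icc_self) h0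
  refine ⟨fun n hn ↦ ?_, ν, hfix ▸ hmaps hν, hlim, ?_⟩
  · obtain ⟨m, rfl⟩ := Nat.exists_eq_add_of_le' hn
    rw [iterate_succ_apply']
    exact hmaps ((hmaps.mono_right Ioc_subset_Icc_self).iterate m h0)
  · have : ν * f₁ = -(f₀ + G ν) := (eq_div_iff hf₁.ne).1 hfix.symm
    linarith

end shiftMap

section asymptotics

variable {A B C c : ℝ}

theorem eventually_rpow_mul_exp_neg_le (p : ℝ) {ε : ℝ} (hε : 0 < ε) :
    ∀ᶠ w in atTop, w ^ p * exp (-w) ≤ ε := by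
  simpa only [neg_one_mul] using
    (tendsto_rpow_mul_exp_neg_mul_atTop_nhds_zero p 1 one_pos).eventually (ge_mem_nhds hε)

theorem eventually_mul_sqrt_mul_exp_neg_le_one (hA : 0 < A) :
    ∀ᶠ w in atTop, A * √w * exp (-w) ≤ 1 := by
  filter_upwards [eventually_rpow_mul_exp_neg_le (1 / 2) (inv_pos.2 hA)] with w hw
  rw [sqrt_eq_rpow, mul_assoc]
  calc A * (w ^ (1 / 2 : ℝ) * exp (-w)) ≤ A * A⁻¹ := mul_le_mul_of_nonneg_left hw hA.le
    _ = 1 := mul_inv_cancel₀ hA.ne'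

theorem eventually_mul_sqrt_mul_exp_neg_sq_le (hA : 0 < A) (hC : 0 < C) :
    ∀ᶠ w in atTop, C * w ^ B * exp (w / 2) * (A * √w * exp (-w)) * (A * √w * exp (-w))
      ≤ exp (-w / 2) / 2 := by
  filter_upwards [eventually_rpow_mul_exp_neg_le (B + 1) (ε := (2 * C * A ^ 2)⁻¹) (by positivity),
    eventually_gt_atTop 0] with w hsmall hw
  have hsqrt : √w * √w = w := mul_self_sqrt hw.le
  have hexp : exp (w / 2) * exp (-w) * exp (-w) = exp (-w) * exp (-w / 2) := by
    simp only [← exp_add]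
    ring_nf
  calc C * w ^ B * exp (w / 2) * (A * √w * exp (-w)) * (A * √w * exp (-w))
      = C * A ^ 2 * (w ^ (B + 1) * exp (-w)) * exp (-w / 2) := by
        rw [rpow_add_one hw.ne']
        linear_combination (C * A ^ 2 * w ^ B * exp (w / 2) * exp (-w) ^ 2) * hsqrt
          + (C * A ^ 2 * w ^ B * w) * hexp
    _ ≤ C * A ^ 2 * (2 * C * A ^ 2)⁻¹ * exp (-w / 2) := by gcongr
    _ = exp (-w / 2) / 2 := by field_simp

theorem eventually_two_mul_mul_sqrt_mul_exp_neg_le (hA : 0 < A) (hC : 0 < C) (hc : 0 < c) :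
    ∀ᶠ w in atTop, 2 * (C * w ^ B * exp (w / 2) * (A * √w * exp (-w))) ≤ c * exp (w / 2) / √w := by
  filter_upwards [eventually_rpow_mul_exp_neg_le (B + 1) (ε := c / (2 * C * A)) (by positivity),
    eventually_gt_atTop 0] with w hsmall hw
  rw [le_div_iff₀ (sqrt_pos.2 hw)]
  calc 2 * (C * w ^ B * exp (w / 2) * (A * √w * exp (-w))) * √w
      = 2 * C * A * (w ^ (B + 1) * exp (-w)) * exp (w / 2) := by
        rw [rpow_add_one hw.ne']
        linear_combination (2 * C * A * w ^ B * exp (w / 2) * exp (-w)) * mul_self_sqrt hw.le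
    _ ≤ 2 * C * A * (c / (2 * C * A)) * exp (w / 2) := by gcongr
    _ = c * exp (w / 2) := by field_simp

theorem mul_sqrt_mul_exp_neg_mul_div_sqrt {w : ℝ} (hw : 0 < w) :
    A * √w * exp (-w) * (c * exp (w / 2) / √w) = A * c * exp (-w / 2) := by
  have hexp : exp (-w / 2) = exp (-w) * exp (w / 2) := by
    rw [← exp_add]
    ring_nf
  rw [hexp]
  field_simp [(sqrt_pos.2 hw).ne']

end asymptotics

theorem stmt_19_general (c₁ C B w₂ : ℝ) (hc₁ : 0 < c₁) (hC : 0 < C)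
    (f₁ : ℝ → ℝ) (R₂ : ℝ → ℝ → ℝ)
    (hf₁ : ∀ w ≥ w₂, f₁ (Real.sqrt w) ∈
      Set.Icc (-c₁⁻¹ * Real.exp (w / 2) / Real.sqrt w) (-c₁ * Real.exp (w / 2) / Real.sqrt w))
    (hGdiff : ∀ w ≥ w₂, ContDiff ℝ 1 (fun t : ℝ => t ^ 2 * R₂ t (Real.sqrt w)))
    (hG : ∀ w ≥ w₂, ∀ ν ∈ Set.Icc (0 : ℝ) 1,
      |deriv (fun t : ℝ => t ^ 2 * R₂ t (Real.sqrt w)) ν|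
        ≤ C * w ^ B * Real.exp (w / 2) * ν) :
    ∃ A w₀ : ℝ, 2 * c₁⁻¹ < A ∧ w₂ ≤ w₀ ∧ ∀ w ≥ w₀, ∀ ν : ℕ → ℝ,
      ν 1 = -Real.exp (-w / 2) / f₁ (Real.sqrt w) →
      (∀ n ≥ 1, ν (n + 1)
          = -(Real.exp (-w / 2) + (ν n) ^ 2 * R₂ (ν n) (Real.sqrt w)) / f₁ (Real.sqrt w)) →
      (∀ n ≥ 1, 0 < ν n ∧ ν n ≤ A * Real.sqrt w * Real.exp (-w))
      ∧ ∃ νlim : ℝ, 0 < νlim ∧ νlim ≤ A * Real.sqrt w * Real.exp (-w)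
          ∧ Tendsto (fun n => ν n) atTop (nhds νlim)
          ∧ Real.exp (-w / 2) + νlim * f₁ (Real.sqrt w)
              + (νlim) ^ 2 * R₂ νlim (Real.sqrt w) = 0 := by
  have hA : 0 < 3 * c₁⁻¹ := by positivity
  obtain ⟨w₀, hw₀⟩ := eventually_atTop.1 <| (eventually_gt_atTop 0).and <|
    (eventually_mul_sqrt_mul_exp_neg_le_one hA).and <|
    (eventually_mul_sqrt_mul_exp_neg_sq_le (B := B) hA hC).and
    (eventually_two_mul_mul_sqrt_mul_exp_neg_le (B := B) hA hC hc₁)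
  refine ⟨3 * c₁⁻¹, max w₀ w₂, by linarith, le_max_right _ _, fun w hw ν hν₁ hrec ↦ ?_⟩
  obtain ⟨hw0, hM1, hKMM, hKM⟩ := hw₀ w (le_of_max_le_left hw)
  have hww₂ : w₂ ≤ w := le_of_max_le_right hw
  set M := 3 * c₁⁻¹ * √w * exp (-w)
  set K := C * w ^ B * exp (w / 2)
  set G : ℝ → ℝ := fun t ↦ t ^ 2 * R₂ t √w
  have hf₁neg : f₁ √w < 0 := (hf₁ w hww₂).2.trans_lt <|
    div_neg_of_neg_of_pos (by simp only [neg_mul, neg_lt_zero]; positivity) (sqrt_pos.2 hw0)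
  have hf₁abs : c₁ * exp (w / 2) / √w ≤ |f₁ √w| := by
    have := (hf₁ w hww₂).2
    rw [neg_mul, neg_div] at this
    exact le_abs.2 (Or.inr (le_neg_of_le_neg this))
  have hLip : LipschitzOnWith (K * M).toNNReal G (Icc 0 M) :=
    lipschitzOnWith_Icc_of_abs_deriv_le_mul ((hGdiff w hww₂).differentiable one_ne_zero)
      (by positivity) fun t ht ↦ hG w hww₂ t ⟨ht.1, ht.2.trans hM1⟩
  have hk : ((K * M).toNNReal : ℝ) = K * M := Real.coe_toNNReal _ (by positivity)
  have hM : 3 * exp (-w / 2) ≤ 2 * M * |f₁ √w| :=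
    calc 3 * exp (-w / 2) ≤ 2 * (3 * c₁⁻¹ * c₁ * exp (-w / 2)) := by
          rw [inv_mul_cancel_right₀ hc₁.ne']
          linarith [exp_pos (-w / 2)]
      _ = 2 * M * (c₁ * exp (w / 2) / √w) := by
          rw [mul_assoc 2 M, mul_sqrt_mul_exp_neg_mul_div_sqrt hw0]
      _ ≤ 2 * M * |f₁ √w| := by gcongr
  obtain ⟨hiter, νlim, hνlim, hlim, hF⟩ := shiftMap_iterate (exp_pos _) hf₁neg (by simp [G]) hLip
    (by rwa [hk]) (by rw [hk]; linarith) hM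
  have hν_iter : ∀ n ≥ 1, ν n = (shiftMap (exp (-w / 2)) (f₁ √w) G)^[n] 0 :=
    eq_iterate_of_forall_succ_eq (by simp [shiftMap, hν₁, G]) hrec
  refine ⟨fun n hn ↦ hν_iter n hn ▸ hiter n hn, νlim, hνlim.1, hνlim.2, hlim.congr' ?_, hF⟩
  filter_upwards [eventually_ge_atTop 1] with n hn using (hν_iter n hn).symm

/-- Contraction scheme for the first Dirichlet eigenvalue of the semiclassical harmonic
oscillator. With `f₀(z) = e^{-z²/2}`, `f₁(√w) ∈ [-c₁⁻¹ w^{-1/2} e^{w/2}, -c₁ w^{-1/2} e^{w/2}]`,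
`G₂(ν,w) = ν² R₂(ν,√w)` with `|∂_ν G₂(ν,w)| ≤ C w^B e^{w/2} ν` on `0 ≤ ν ≤ 1`, the iteration
`ν₁ = -f₀(√w)/f₁(√w)`, `ν_{n+1} = -(f₀(√w) + G₂(ν_n,w))/f₁(√w)` satisfies, for suitable
`A > 2c₁⁻¹` and all `w` large: `0 < ν_n ≤ A√w e^{-w}` for every `n ≥ 1`, the `ν_n` converge
to some `ν(w) ∈ (0, A√w e^{-w}]`, and `F(ν(w),w) = f₀(√w) + ν(w) f₁(√w) + G₂(ν(w),w) = 0`. -/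
theorem stmt_19 (c₁ C B w₂ : ℝ) (hc₁ : 0 < c₁) (hc₁1 : c₁ ≤ 1) (hC : 0 < C) (hw₂ : 1 ≤ w₂)
    (f₁ : ℝ → ℝ) (R₂ : ℝ → ℝ → ℝ)
    (hf₁ : ∀ w ≥ w₂, f₁ (Real.sqrt w) ∈
      Set.Icc (-c₁⁻¹ * Real.exp (w / 2) / Real.sqrt w) (-c₁ * Real.exp (w / 2) / Real.sqrt w))
    (hGdiff : ∀ w ≥ w₂, ContDiff ℝ 1 (fun t : ℝ => t ^ 2 * R₂ t (Real.sqrt w)))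
    (hG : ∀ w ≥ w₂, ∀ ν ∈ Set.Icc (0 : ℝ) 1,
      |deriv (fun t : ℝ => t ^ 2 * R₂ t (Real.sqrt w)) ν|
        ≤ C * w ^ B * Real.exp (w / 2) * ν) :
    ∃ A w₀ : ℝ, 2 * c₁⁻¹ < A ∧ w₂ ≤ w₀ ∧ ∀ w ≥ w₀, ∀ ν : ℕ → ℝ,
      ν 1 = -Real.exp (-w / 2) / f₁ (Real.sqrt w) →
      (∀ n ≥ 1, ν (n + 1)
          = -(Real.exp (-w / 2) + (ν n) ^ 2 * R₂ (ν n) (Real.sqrt w)) / f₁ (Real.sqrt w)) →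
      (∀ n ≥ 1, 0 < ν n ∧ ν n ≤ A * Real.sqrt w * Real.exp (-w))
      ∧ ∃ νlim : ℝ, 0 < νlim ∧ νlim ≤ A * Real.sqrt w * Real.exp (-w)
          ∧ Tendsto (fun n => ν n) atTop (nhds νlim)
          ∧ Real.exp (-w / 2) + νlim * f₁ (Real.sqrt w)
              + (νlim) ^ 2 * R₂ νlim (Real.sqrt w) = 0 :=
  stmt_19_general c₁ C B w₂ hc₁ hC f₁ R₂ hf₁ hGdiff hG
end
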